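/- arXiv:1502.05238 — 9 statements merged into one kernel-verified Lean document; each statement's English description precedes it below -/
import Mathlib

section
/- Every finite collection of alternatives admits at least one boundaries-included average fixed point; that is, for every n ≥ 1 and every a : Fin n → [0,1]², there exists x ∈ ℝ² such that the index set S = {k : ¬(a^k_1 < x_1 ∧ a^k_2 < x_2)} is nonempty and (1/|S|)·Σ_{k∈S} a^k = x. -/
open Finset

attribute [local instance] Classical.propDecidable

/-- Average of the alternatives over a finite set of indices. -/
noncomputable def avg {n : ℕ} (a : Fin n → ℝ × ℝ) (S : Finset (Fin n)) : ℝ × ℝ :=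
  (S.card : ℝ)⁻¹ • ∑ k ∈ S, a k

/-- The set of indices whose alternative is strictly below `x` in both coordinates. -/
noncomputable def Alt {n : ℕ} (a : Fin n → ℝ × ℝ) (x : ℝ × ℝ) : Finset (Fin n) :=
  Finset.univ.filter (fun k => (a k).1 < x.1 ∧ (a k).2 < x.2)

/-- `x` is a boundaries-included average fixed point of the collection `a`. -/
def IsBIAFP {n : ℕ} (a : Fin n → ℝ × ℝ) (x : ℝ × ℝ) : Prop :=
  (Finset.univ \ Alt a x).Nonempty ∧ avg a (Finset.univ \ Alt a x) = x

lemma avg_fst {n : ℕ} (a : Fin n → ℝ × ℝ) (S : Finset (Fin n)) :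
    (avg a S).1 = (S.card : ℝ)⁻¹ * ∑ k ∈ S, (a k).1 := by
  simp [avg, Prod.fst_sum]

lemma avg_snd {n : ℕ} (a : Fin n → ℝ × ℝ) (S : Finset (Fin n)) :
    (avg a S).2 = (S.card : ℝ)⁻¹ * ∑ k ∈ S, (a k).2 := by
  simp [avg, Prod.snd_sum]

/-- Removing an element weakly below the average raises the average. -/
lemma erase_avg_ge {n : ℕ} (S : Finset (Fin n)) (k : Fin n) (hk : k ∈ S)
    (hne : (S.erase k).Nonempty) (f : Fin n → ℝ)
    (h : f k ≤ (S.card : ℝ)⁻¹ * ∑ j ∈ S, f j) :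
    (S.card : ℝ)⁻¹ * ∑ j ∈ S, f j ≤ ((S.erase k).card : ℝ)⁻¹ * ∑ j ∈ S.erase k, f j := by
  have hcard : (S.erase k).card = S.card - 1 := Finset.card_erase_of_mem hk
  have h1 : 1 ≤ (S.erase k).card := Finset.card_pos.mpr hne
  have h2 : 2 ≤ S.card := by omega
  have hm : (2 : ℝ) ≤ (S.card : ℝ) := by exact_mod_cast h2
  have hsum : ∑ j ∈ S.erase k, f j = (∑ j ∈ S, f j) - f k := by
    rw [← Finset.sum_erase_add S f hk]; ring
  have hcard' : ((S.erase k).card : ℝ) = (S.card : ℝ) - 1 := by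
    rw [hcard]; push_cast [Nat.cast_sub (by omega : 1 ≤ S.card)]; ring
  rw [hsum, hcard']
  set m : ℝ := (S.card : ℝ)
  set A : ℝ := ∑ j ∈ S, f j
  have hm0 : 0 < m := by linarith
  have hm1 : 0 < m - 1 := by linarith
  rw [inv_mul_eq_div, inv_mul_eq_div, div_le_div_iff₀ hm0 hm1]
  have hfk : f k * m ≤ A := by
    have := mul_le_mul_of_nonneg_right h (le_of_lt hm0)
    rwa [inv_mul_eq_div, div_mul_cancel₀ _ (ne_of_gt hm0)] at this
  nlinarith

/-- Every finite collection of alternatives admits at least one boundaries-included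
average fixed point. -/
theorem exists_boundaries_included_average_fixed_point
    (n : ℕ) (hn : 1 ≤ n) (a : Fin n → ℝ × ℝ)
    (ha : ∀ k, (a k).1 ∈ Set.Icc (0:ℝ) 1 ∧ (a k).2 ∈ Set.Icc (0:ℝ) 1) :
    ∃ x : ℝ × ℝ, IsBIAFP a x := by
  classical
  haveI : Nonempty (Fin n) := ⟨⟨0, hn⟩⟩
  set P : Finset (Fin n) → Prop := fun D => D ≠ Finset.univ ∧
    ∀ k ∈ D, (a k).1 < (avg a (Finset.univ \ D)).1 ∧ (a k).2 < (avg a (Finset.univ \ D)).2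
    with hP
  set 𝒟 : Finset (Finset (Fin n)) := (Finset.univ : Finset (Fin n)).powerset.filter P with h𝒟
  have hempty : (∅ : Finset (Fin n)) ∈ 𝒟 := by
    simp only [h𝒟, Finset.mem_filter, Finset.mem_powerset]
    exact ⟨Finset.empty_subset _, fun h => Finset.univ_nonempty.ne_empty h.symm, by simp⟩
  have hne : 𝒟.Nonempty := ⟨∅, hempty⟩
  obtain ⟨D, hD, hmax⟩ := Finset.exists_max_image 𝒟 Finset.card hne
  have hDP : P D := (Finset.mem_filter.mp hD).2
  obtain ⟨hDne, hDdom⟩ := hDP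
  set x : ℝ × ℝ := avg a (Finset.univ \ D) with hx
  have hSne : (Finset.univ \ D).Nonempty := by
    rw [Finset.sdiff_nonempty]
    intro hsub
    exact hDne (le_antisymm (Finset.subset_univ D) hsub)
  have hAlt : Alt a x = D := by
    apply Finset.Subset.antisymm
    · intro k hk
      by_contra hkD
      have hkdom : (a k).1 < x.1 ∧ (a k).2 < x.2 := by
        simpa [Alt] using hk
      set S := Finset.univ \ D with hS
      have hkS : k ∈ S := by simp [hS, hkD]
      set D' := insert k D with hD'
      have hSD' : Finset.univ \ D' = S.erase k := by
        rw [hD', Finset.sdiff_insert]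
      by_cases hSe : (S.erase k).Nonempty
      · -- build bigger candidate
        have hge1 : x.1 ≤ (avg a (Finset.univ \ D')).1 := by
          rw [hSD', hx, avg_fst, avg_fst]
          exact erase_avg_ge S k hkS hSe (fun j => (a j).1)
            (le_of_lt (by rw [hx, avg_fst] at hkdom; exact hkdom.1))
        have hge2 : x.2 ≤ (avg a (Finset.univ \ D')).2 := by
          rw [hSD', hx, avg_snd, avg_snd]
          exact erase_avg_ge S k hkS hSe (fun j => (a j).2)
            (le_of_lt (by rw [hx, avg_snd] at hkdom; exact hkdom.2))
        have hD'P : P D' := by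
          constructor
          · intro hcontra
            have hvoid : S.erase k = ∅ := by
              rw [← hSD', hcontra, Finset.sdiff_self]
            exact hSe.ne_empty hvoid
          · intro j hj
            rcases Finset.mem_insert.mp hj with rfl | hjD
            · exact ⟨lt_of_lt_of_le hkdom.1 hge1, lt_of_lt_of_le hkdom.2 hge2⟩
            · obtain ⟨h1, h2⟩ := hDdom j hjD
              exact ⟨lt_of_lt_of_le h1 hge1, lt_of_lt_of_le h2 hge2⟩
        have hD'mem : D' ∈ 𝒟 := by
          simp only [h𝒟, Finset.mem_filter, Finset.mem_powerset]
          exact ⟨Finset.subset_univ _, hD'P⟩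
        have := hmax D' hD'mem
        rw [hD', Finset.card_insert_of_notMem hkD] at this
        omega
      · -- S = {k}
        rw [Finset.not_nonempty_iff_eq_empty] at hSe
        have hSk : S = {k} := by
          apply Finset.eq_singleton_iff_unique_mem.mpr
          refine ⟨hkS, fun y hy => ?_⟩
          by_contra hyk
          exact (Finset.notMem_empty y) (hSe ▸ Finset.mem_erase.mpr ⟨hyk, hy⟩)
        have : x = a k := by
          rw [hx, hS] at *
          rw [show Finset.univ \ D = ({k} : Finset (Fin n)) from hSk]
          simp [avg]
        rw [this] at hkdom
        exact lt_irrefl _ hkdom.1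
    · intro k hk
      obtain ⟨h1, h2⟩ := hDdom k hk
      simp [Alt, h1, h2]
  refine ⟨x, ?_, ?_⟩ <;> rw [hAlt]
  exact hSne
end

section
/- Any two average fixed points of a finite collection of alternatives are comparable in the coordinatewise order: if x and y are both average fixed points of a : Fin n → [0,1]², then either (x_1 ≤ y_1 and x_2 ≤ y_2) or (y_1 ≤ x_1 and y_2 ≤ x_2). -/
open Finset

attribute [local instance] Classical.propDecidable

/-- Indices whose alternative is weakly below `x` in both coordinates. -/
noncomputable def Ale {n : ℕ} (a : Fin n → ℝ × ℝ) (x : ℝ × ℝ) : Finset (Fin n) :=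
  Finset.univ.filter (fun k => (a k).1 ≤ x.1 ∧ (a k).2 ≤ x.2)

/-- `x` is an average fixed point of the collection `a`. -/
def IsAFP {n : ℕ} (a : Fin n → ℝ × ℝ) (x : ℝ × ℝ) : Prop :=
  ∃ B ⊆ Ale a x \ Alt a x,
    ((Finset.univ \ Ale a x) ∪ B).Nonempty ∧ avg a ((Finset.univ \ Ale a x) ∪ B) = x

lemma afp_incomparable_false {n : ℕ} (a : Fin n → ℝ × ℝ) (x y : ℝ × ℝ)
    (hx : IsAFP a x) (hy : IsAFP a y) (h1 : x.1 < y.1) (h2 : y.2 < x.2) : False := by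
  classical
  obtain ⟨Bx, hBx, hSne, hSavg⟩ := hx
  obtain ⟨By, hBy, hTne, hTavg⟩ := hy
  set S := (Finset.univ \ Ale a x) ∪ Bx with hS
  set T := (Finset.univ \ Ale a y) ∪ By with hT
  -- every element of S is not strictly below x
  have hSnotAlt : ∀ k ∈ S, ¬((a k).1 < x.1 ∧ (a k).2 < x.2) := by
    intro k hk
    rcases Finset.mem_union.1 hk with h | h
    · have hkA : k ∉ Ale a x := (Finset.mem_sdiff.1 h).2
      simp only [Ale, Finset.mem_filter, Finset.mem_univ, true_and] at hkA
      intro hc; exact hkA ⟨hc.1.le, hc.2.le⟩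
    · have := hBx h
      have hkA : k ∉ Alt a x := (Finset.mem_sdiff.1 this).2
      simp only [Alt, Finset.mem_filter, Finset.mem_univ, true_and] at hkA
      exact hkA
  -- not in S means in Ale a x
  have hnotS : ∀ k, k ∉ S → (a k).1 ≤ x.1 ∧ (a k).2 ≤ x.2 := by
    intro k hk
    by_contra hc
    have : k ∈ Finset.univ \ Ale a x := by
      simp only [Finset.mem_sdiff, Finset.mem_univ, true_and, Ale, Finset.mem_filter]
      tauto
    exact hk (Finset.mem_union_left _ this)
  have hnotT : ∀ k, k ∉ T → (a k).1 ≤ y.1 ∧ (a k).2 ≤ y.2 := by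
    intro k hk
    by_contra hc
    have : k ∈ Finset.univ \ Ale a y := by
      simp only [Finset.mem_sdiff, Finset.mem_univ, true_and, Ale, Finset.mem_filter]
      tauto
    exact hk (Finset.mem_union_left _ this)
  -- elements of T \ S have first coordinate ≤ x.1
  have hTS : ∀ k ∈ T \ S, (a k).1 ≤ x.1 := by
    intro k hk
    exact (hnotS k (Finset.mem_sdiff.1 hk).2).1
  -- elements of S \ T have first coordinate ≥ x.1
  have hST : ∀ k ∈ S \ T, x.1 ≤ (a k).1 := by
    intro k hk
    obtain ⟨hkS, hkT⟩ := Finset.mem_sdiff.1 hk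
    have h2' : (a k).2 ≤ y.2 := (hnotT k hkT).2
    have := hSnotAlt k hkS
    by_contra hc
    push_neg at hc
    exact this ⟨hc, lt_of_le_of_lt h2' h2⟩
  -- sums of first coordinates
  have hScard : (S.card : ℝ) ≠ 0 := by
    exact_mod_cast Finset.card_ne_zero_of_mem hSne.choose_spec
  have hTcard : (0:ℝ) < (T.card : ℝ) := by
    exact_mod_cast Finset.card_pos.2 hTne
  have sumS : ∑ k ∈ S, (a k).1 = (S.card : ℝ) * x.1 := by
    have := congrArg Prod.fst hSavg
    simp only [avg, Prod.smul_fst, smul_eq_mul, Prod.fst_sum] at this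
    field_simp at this
    linarith [this]
  have sumT : ∑ k ∈ T, (a k).1 = (T.card : ℝ) * y.1 := by
    have := congrArg Prod.fst hTavg
    simp only [avg, Prod.smul_fst, smul_eq_mul, Prod.fst_sum] at this
    field_simp at this
    linarith [this]
  -- split sums over intersections
  have hSsplit : ∑ k ∈ S ∩ T, (a k).1 + ∑ k ∈ S \ T, (a k).1 = ∑ k ∈ S, (a k).1 :=
    Finset.sum_inter_add_sum_sdiff S T _
  have hTsplit : ∑ k ∈ S ∩ T, (a k).1 + ∑ k ∈ T \ S, (a k).1 = ∑ k ∈ T, (a k).1 := by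
    rw [Finset.inter_comm]
    exact Finset.sum_inter_add_sum_sdiff T S _
  have hb1 : ∑ k ∈ T \ S, (a k).1 ≤ ((T \ S).card : ℝ) * x.1 := by
    have := Finset.sum_le_card_nsmul (T \ S) (fun k => (a k).1) x.1 hTS
    simpa [nsmul_eq_mul] using this
  have hb2 : ((S \ T).card : ℝ) * x.1 ≤ ∑ k ∈ S \ T, (a k).1 := by
    have := Finset.card_nsmul_le_sum (S \ T) (fun k => (a k).1) x.1 hST
    simpa [nsmul_eq_mul] using this
  have hc1 : ((S ∩ T).card : ℝ) + ((S \ T).card : ℝ) = (S.card : ℝ) := by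
    exact_mod_cast Finset.card_inter_add_card_sdiff S T
  have hc2 : ((S ∩ T).card : ℝ) + ((T \ S).card : ℝ) = (T.card : ℝ) := by
    rw [Finset.inter_comm]
    exact_mod_cast Finset.card_inter_add_card_sdiff T S
  have hc1' : ((S ∩ T).card : ℝ) * x.1 + ((S \ T).card : ℝ) * x.1 = (S.card : ℝ) * x.1 := by
    rw [← add_mul, hc1]
  have hc2' : ((S ∩ T).card : ℝ) * x.1 + ((T \ S).card : ℝ) * x.1 = (T.card : ℝ) * x.1 := by
    rw [← add_mul, hc2]
  have hkey : (T.card : ℝ) * y.1 ≤ (T.card : ℝ) * x.1 := by linarith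
  have := mul_lt_mul_of_pos_left h1 hTcard
  linarith

/-- Any two average fixed points are comparable in the coordinatewise order. -/
theorem average_fixed_points_comparable
    (n : ℕ) (a : Fin n → ℝ × ℝ)
    (ha : ∀ k, (a k).1 ∈ Set.Icc (0:ℝ) 1 ∧ (a k).2 ∈ Set.Icc (0:ℝ) 1)
    (x y : ℝ × ℝ) (hx : IsAFP a x) (hy : IsAFP a y) :
    (x.1 ≤ y.1 ∧ x.2 ≤ y.2) ∨ (y.1 ≤ x.1 ∧ y.2 ≤ x.2) := by
  by_contra hc
  push_neg at hc
  obtain ⟨hc1, hc2⟩ := hc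
  rcases le_or_gt x.1 y.1 with h1 | h1
  · -- x.1 ≤ y.1, so x.2 > y.2 (from hc1), hence x.1 < y.1 (from hc2)
    have hy2 : y.2 < x.2 := hc1 h1
    have hx1 : x.1 < y.1 := lt_of_le_of_ne h1 (by
      intro he
      exact absurd (hc2 (he ▸ le_refl _)) (not_lt.2 hy2.le))
    exact afp_incomparable_false a x y hx hy hx1 hy2
  · have hx2 : x.2 < y.2 := hc2 h1.le
    exact afp_incomparable_false a y x hy hx h1 hx2
end

section
/- If a finite collection of alternatives is symmetric, then every average fixed point of it lies on the diagonal: for every symmetric collection a : Fin n → [0,1]² and every average fixed point x = (x_1, x_2) of the collection, x_1 = x_2. -/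
open Finset

attribute [local instance] Classical.propDecidable

/-- A collection is symmetric if every point appears as often as its coordinate swap. -/
def IsSymmColl {n : ℕ} (a : Fin n → ℝ × ℝ) : Prop :=
  ∀ p : ℝ × ℝ,
    (Finset.univ.filter (fun k => a k = p)).card =
      (Finset.univ.filter (fun k => a k = Prod.swap p)).card

/-- Auxiliary: total sum of first minus second coordinates vanishes for symmetric collections. -/
lemma total_sum_zero {n : ℕ} (a : Fin n → ℝ × ℝ) (hsymm : IsSymmColl a) :
    ∑ k : Fin n, ((a k).1 - (a k).2) = 0 := by
  classical
  set f : ℝ × ℝ → ℝ := fun p => p.1 - p.2 with hf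
  set m : ℝ × ℝ → ℕ := fun p => (Finset.univ.filter fun k => a k = p).card with hm
  have h1 : ∑ k : Fin n, f (a k) = ∑ p ∈ Finset.univ.image a, m p • f p :=
    Finset.sum_comp f a
  have hswapmem : ∀ p ∈ Finset.univ.image a, Prod.swap p ∈ Finset.univ.image a := by
    intro p hp
    obtain ⟨k, -, hk⟩ := Finset.mem_image.mp hp
    have hpos : 0 < m (Prod.swap p) := by
      rw [hm]; dsimp only
      rw [← hsymm p]
      exact Finset.card_pos.mpr ⟨k, Finset.mem_filter.mpr ⟨Finset.mem_univ k, hk⟩⟩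
    obtain ⟨j, hj⟩ := Finset.card_pos.mp hpos
    exact Finset.mem_image.mpr ⟨j, Finset.mem_univ j, (Finset.mem_filter.mp hj).2⟩
  have h2 : ∑ p ∈ Finset.univ.image a, m p • f p
      = ∑ p ∈ Finset.univ.image a, m (Prod.swap p) • f (Prod.swap p) := by
    refine Finset.sum_nbij' Prod.swap Prod.swap hswapmem hswapmem
      (fun p _ => Prod.swap_swap p) (fun p _ => Prod.swap_swap p) ?_
    intro p hp
    rw [Prod.swap_swap]
  have h3 : ∀ p : ℝ × ℝ, m (Prod.swap p) • f (Prod.swap p) = -(m p • f p) := by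
    intro p
    have hmp : m (Prod.swap p) = m p := (hsymm p).symm
    have hfp : f (Prod.swap p) = -(f p) := by simp [hf, Prod.swap]
    rw [hmp, hfp, smul_neg]
  have : ∑ p ∈ Finset.univ.image a, m p • f p
      = -∑ p ∈ Finset.univ.image a, m p • f p := by
    conv_lhs => rw [h2]
    rw [← Finset.sum_neg_distrib]
    exact Finset.sum_congr rfl fun p _ => h3 p
  have hz : ∑ p ∈ Finset.univ.image a, m p • f p = 0 := by linarith
  rw [h1] at *
  simpa [hf] using hz

/-- Auxiliary: for a symmetric collection, an average fixed point satisfies `x.2 ≤ x.1`. -/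
lemma afp_snd_le_fst {n : ℕ} (a : Fin n → ℝ × ℝ) (hsymm : IsSymmColl a)
    (x : ℝ × ℝ) (hx : IsAFP a x) : x.2 ≤ x.1 := by
  classical
  by_contra hcon
  push_neg at hcon  -- x.1 < x.2
  obtain ⟨B, hB, hne, havg⟩ := hx
  set f : ℝ × ℝ → ℝ := fun p => p.1 - p.2 with hf
  set S : Finset (Fin n) := (Finset.univ \ Ale a x) ∪ B with hS
  set C : Finset (Fin n) := Ale a x \ B with hC
  have hBAle : B ⊆ Ale a x := hB.trans (Finset.sdiff_subset)
  have hCU : C = Finset.univ \ S := by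
    ext k
    simp only [hC, hS, Finset.mem_sdiff, Finset.mem_union, Finset.mem_univ, true_and,
      not_or, not_not]
  -- the sum over S
  have hcardS : (0:ℝ) < S.card := by
    exact_mod_cast Finset.card_pos.mpr hne
  have hsumS : ∑ k ∈ S, a k = (S.card : ℝ) • x := by
    have := congrArg (fun z => (S.card : ℝ) • z) havg
    simpa [avg, smul_smul, mul_inv_cancel₀ (ne_of_gt hcardS)] using this
  have hfS : ∑ k ∈ S, f (a k) = (S.card : ℝ) * (x.1 - x.2) := by
    have h1 : (∑ k ∈ S, a k).1 = (S.card : ℝ) * x.1 := by rw [hsumS]; simp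
    have h2 : (∑ k ∈ S, a k).2 = (S.card : ℝ) * x.2 := by rw [hsumS]; simp
    rw [Prod.fst_sum] at h1
    rw [Prod.snd_sum] at h2
    simp only [hf]
    rw [Finset.sum_sub_distrib, h1, h2]
    ring
  -- the sum over C is nonpositive
  set P : Finset (Fin n) := C.filter (fun k => 0 < f (a k)) with hP
  set N : Finset (Fin n) := Finset.univ.filter
    (fun k => (a k).1 < x.1 ∧ (a k).2 < x.2 ∧ f (a k) < 0) with hN
  have hNC : N ⊆ C := by
    intro k hk
    simp only [hN, Finset.mem_filter, Finset.mem_univ, true_and] at hk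
    obtain ⟨h1, h2, h3⟩ := hk
    simp only [hC, Finset.mem_sdiff]
    constructor
    · simp only [Ale, Finset.mem_filter, Finset.mem_univ, true_and]
      exact ⟨le_of_lt h1, le_of_lt h2⟩
    · intro hkB
      have := hB hkB
      simp only [Finset.mem_sdiff, Alt, Finset.mem_filter, Finset.mem_univ, true_and] at this
      exact this.2 ⟨h1, h2⟩
  have hPC : P ⊆ C := Finset.filter_subset _ _
  have hPN : Disjoint P N := by
    rw [Finset.disjoint_left]
    intro k hkP hkN
    simp only [hP, Finset.mem_filter] at hkP
    simp only [hN, Finset.mem_filter] at hkN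
    linarith [hkP.2, hkN.2.2.2]
  -- properties of points of P
  have hPprop : ∀ p ∈ P.image a, p.1 ≤ x.1 ∧ p.2 ≤ x.2 ∧ 0 < f p := by
    intro p hp
    obtain ⟨k, hk, rfl⟩ := Finset.mem_image.mp hp
    simp only [hP, Finset.mem_filter] at hk
    obtain ⟨hkC, hkf⟩ := hk
    simp only [hC, Finset.mem_sdiff, Ale, Finset.mem_filter, Finset.mem_univ, true_and] at hkC
    exact ⟨hkC.1.1, hkC.1.2, hkf⟩
  have hNval : ∀ p ∈ P.image a, ∀ k : Fin n, a k = Prod.swap p → k ∈ N := by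
    intro p hp k hk
    obtain ⟨h1, h2, h3⟩ := hPprop p hp
    have hp12 : p.2 < p.1 := by simp only [hf] at h3; linarith
    simp only [hN, Finset.mem_filter, Finset.mem_univ, true_and, hk]
    refine ⟨?_, ?_, ?_⟩
    · show (Prod.swap p).1 < x.1
      simp only [Prod.fst_swap]; linarith
    · show (Prod.swap p).2 < x.2
      simp only [Prod.snd_swap]; linarith
    · show f (Prod.swap p) < 0
      simp only [hf, Prod.fst_swap, Prod.snd_swap]; linarith
  have hNfilter : ∀ p ∈ P.image a,
      (N.filter fun k => a k = Prod.swap p) = (Finset.univ.filter fun k => a k = Prod.swap p) := by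
    intro p hp
    apply Finset.Subset.antisymm
    · exact Finset.filter_subset_filter _ (Finset.subset_univ N)
    · intro k hk
      simp only [Finset.mem_filter, Finset.mem_univ, true_and] at hk
      exact Finset.mem_filter.mpr ⟨hNval p hp k hk, hk⟩
  -- key inequality: sum over P bounded by sum of -f over N
  have step1 : ∑ k ∈ P, f (a k)
      = ∑ p ∈ P.image a, (P.filter fun k => a k = p).card • f p := Finset.sum_comp f a
  have step2 : ∀ p ∈ P.image a,
      (P.filter fun k => a k = p).card • f p ≤ (N.filter fun k => a k = Prod.swap p).card • f p := by
    intro p hp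
    obtain ⟨-, -, h3⟩ := hPprop p hp
    have hcard : (P.filter fun k => a k = p).card ≤ (N.filter fun k => a k = Prod.swap p).card := by
      rw [hNfilter p hp, ← hsymm p]
      exact Finset.card_le_card (Finset.filter_subset_filter _ (Finset.subset_univ P))
    rw [nsmul_eq_mul, nsmul_eq_mul]
    exact mul_le_mul_of_nonneg_right (Nat.cast_le.mpr hcard) (le_of_lt h3)
  have step3 : ∑ p ∈ P.image a, (N.filter fun k => a k = Prod.swap p).card • f p
      = ∑ q ∈ (P.image a).image Prod.swap, (N.filter fun k => a k = q).card • (-(f q)) := by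
    rw [Finset.sum_image (fun p _ q _ h => Prod.swap_injective h)]
    refine Finset.sum_congr rfl fun p _ => ?_
    have : -(f (Prod.swap p)) = f p := by
      simp [hf, Prod.fst_swap, Prod.snd_swap]
    rw [this]
  have hsub : (P.image a).image Prod.swap ⊆ N.image a := by
    intro q hq
    obtain ⟨p, hp, rfl⟩ := Finset.mem_image.mp hq
    have hpos : 0 < (Finset.univ.filter fun k => a k = Prod.swap p).card := by
      rw [← hsymm p]
      obtain ⟨k, hk, rfl⟩ := Finset.mem_image.mp hp
      exact Finset.card_pos.mpr ⟨k, Finset.mem_filter.mpr ⟨Finset.mem_univ k, rfl⟩⟩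
    obtain ⟨j, hj⟩ := Finset.card_pos.mp hpos
    have hja := (Finset.mem_filter.mp hj).2
    exact Finset.mem_image.mpr ⟨j, hNval p hp j hja, hja⟩
  have step4 : ∑ q ∈ (P.image a).image Prod.swap, (N.filter fun k => a k = q).card • (-(f q))
      ≤ ∑ q ∈ N.image a, (N.filter fun k => a k = q).card • (-(f q)) := by
    refine Finset.sum_le_sum_of_subset_of_nonneg hsub fun q hq _ => ?_
    obtain ⟨k, hk, rfl⟩ := Finset.mem_image.mp hq
    simp only [hN, Finset.mem_filter] at hk
    have : 0 ≤ -(f (a k)) := by linarith [hk.2.2.2]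
    positivity
  have step5 : ∑ q ∈ N.image a, (N.filter fun k => a k = q).card • (-(f q))
      = ∑ k ∈ N, -(f (a k)) := (Finset.sum_comp (fun q => -(f q)) a).symm
  have hPlesum : ∑ k ∈ P, f (a k) ≤ ∑ k ∈ N, -(f (a k)) := by
    rw [step1]
    calc ∑ p ∈ P.image a, (P.filter fun k => a k = p).card • f p
        ≤ ∑ p ∈ P.image a, (N.filter fun k => a k = Prod.swap p).card • f p :=
          Finset.sum_le_sum step2
      _ = ∑ q ∈ (P.image a).image Prod.swap, (N.filter fun k => a k = q).card • (-(f q)) := step3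
      _ ≤ ∑ q ∈ N.image a, (N.filter fun k => a k = q).card • (-(f q)) := step4
      _ = ∑ k ∈ N, -(f (a k)) := step5
  -- assemble: sum over C ≤ 0
  have hPNC : P ∪ N ⊆ C := Finset.union_subset hPC hNC
  have hCsplit : ∑ k ∈ C, f (a k)
      = ∑ k ∈ C \ (P ∪ N), f (a k) + ∑ k ∈ P ∪ N, f (a k) :=
    (Finset.sum_sdiff hPNC).symm
  have hrest : ∑ k ∈ C \ (P ∪ N), f (a k) ≤ 0 := by
    apply Finset.sum_nonpos
    intro k hk
    simp only [Finset.mem_sdiff, Finset.mem_union, not_or] at hk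
    have hkP := hk.2.1
    simp only [hP, Finset.mem_filter, not_and] at hkP
    have := hkP hk.1
    linarith [not_lt.mp this]
  have hPNle : ∑ k ∈ P ∪ N, f (a k) ≤ 0 := by
    rw [Finset.sum_union hPN]
    have : ∑ k ∈ N, f (a k) = -∑ k ∈ N, -(f (a k)) := by
      rw [← Finset.sum_neg_distrib]; simp
    linarith [hPlesum]
  have hCle : ∑ k ∈ C, f (a k) ≤ 0 := by rw [hCsplit]; linarith
  -- total
  have htot := total_sum_zero a hsymm
  have hsplit : ∑ k : Fin n, f (a k) = ∑ k ∈ C, f (a k) + ∑ k ∈ S, f (a k) := by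
    rw [hCU]
    exact (Finset.sum_sdiff (Finset.subset_univ S)).symm
  have : (0:ℝ) < (S.card : ℝ) * (x.2 - x.1) := by
    apply mul_pos hcardS; linarith
  simp only [hf] at htot hsplit hfS hCle
  nlinarith [htot, hsplit, hfS, hCle]

/-- Swapping the collection preserves symmetry. -/
lemma isSymmColl_swap {n : ℕ} (a : Fin n → ℝ × ℝ) (hsymm : IsSymmColl a) :
    IsSymmColl (fun k => Prod.swap (a k)) := by
  intro p
  have h1 : (Finset.univ.filter fun k => Prod.swap (a k) = p)
      = (Finset.univ.filter fun k => a k = Prod.swap p) := by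
    apply Finset.filter_congr
    intro k _
    constructor
    · intro h; rw [← h, Prod.swap_swap]
    · intro h; rw [h, Prod.swap_swap]
  have h2 : (Finset.univ.filter fun k => Prod.swap (a k) = Prod.swap p)
      = (Finset.univ.filter fun k => a k = p) := by
    apply Finset.filter_congr
    intro k _
    exact ⟨fun h => Prod.swap_injective h, fun h => by rw [h]⟩
  rw [h1, h2, ← hsymm p]

/-- Swapping the collection and the point preserves the AFP property. -/
lemma isAFP_swap {n : ℕ} (a : Fin n → ℝ × ℝ) (x : ℝ × ℝ) (hx : IsAFP a x) :
    IsAFP (fun k => Prod.swap (a k)) (Prod.swap x) := by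
  classical
  obtain ⟨B, hB, hne, havg⟩ := hx
  have hAle : Ale (fun k => Prod.swap (a k)) (Prod.swap x) = Ale a x := by
    ext k
    simp only [Ale, Finset.mem_filter, Finset.mem_univ, true_and, Prod.fst_swap, Prod.snd_swap]
    tauto
  have hAlt : Alt (fun k => Prod.swap (a k)) (Prod.swap x) = Alt a x := by
    ext k
    simp only [Alt, Finset.mem_filter, Finset.mem_univ, true_and, Prod.fst_swap, Prod.snd_swap]
    tauto
  refine ⟨B, by rw [hAle, hAlt]; exact hB, by rw [hAle]; exact hne, ?_⟩
  rw [hAle]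
  have : avg (fun k => Prod.swap (a k)) ((Finset.univ \ Ale a x) ∪ B)
      = Prod.swap (avg a ((Finset.univ \ Ale a x) ∪ B)) := by
    have hsum : ∑ k ∈ (Finset.univ \ Ale a x) ∪ B, Prod.swap (a k)
        = Prod.swap (∑ k ∈ (Finset.univ \ Ale a x) ∪ B, a k) := by
      apply Prod.ext <;> simp [Prod.fst_sum, Prod.snd_sum]
    unfold avg
    rw [hsum, Prod.smul_swap]
  rw [this, havg]

/-- For symmetric collections, every average fixed point lies on the diagonal. -/
theorem average_fixed_point_of_symmetric_on_diagonal
    (n : ℕ) (a : Fin n → ℝ × ℝ)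
    (ha : ∀ k, (a k).1 ∈ Set.Icc (0:ℝ) 1 ∧ (a k).2 ∈ Set.Icc (0:ℝ) 1)
    (hsymm : IsSymmColl a)
    (x : ℝ × ℝ) (hx : IsAFP a x) :
    x.1 = x.2 := by
  have h1 : x.2 ≤ x.1 := afp_snd_le_fst a hsymm x hx
  have h2 : (Prod.swap x).2 ≤ (Prod.swap x).1 :=
    afp_snd_le_fst _ (isSymmColl_swap a hsymm) _ (isAFP_swap a x hx)
  simp only [Prod.fst_swap, Prod.snd_swap] at h2
  exact le_antisymm h2 h1
end

section
/- For every collection a : Fin n → [0,1]² (n ≥ 1) and every 0 < δ ≤ 1, the game Γ_{SA_δ}(A) admits a pure Nash equilibrium, and every pure Nash equilibrium outcome (o₁, o₂) is δ-Pareto efficient, i.e., there is no index k with a^k_1 > o₁ + δ and a^k_2 > o₂ + δ. -/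
open Finset

attribute [local instance] Classical.propDecidable

/-- The expected pair of payoffs in the satisfactory-alternatives mechanism `SA_δ`
when the players submit the sets `L₁`, `L₂`. -/
noncomputable def SAout {n : ℕ} (a : Fin n → ℝ × ℝ) (δ : ℝ)
    (L₁ L₂ : Finset (Fin n)) : ℝ × ℝ :=
  if L₁ ∩ L₂ = ∅ then
    (if L₁ ∪ L₂ = ∅ then avg a Finset.univ else avg a (L₁ ∪ L₂))
  else (1 - δ) • avg a (L₁ ∩ L₂) + δ • avg a (L₁ ∪ L₂)

/-- `(L₁, L₂)` is a pure Nash equilibrium of the game `Γ_{SA_δ}(A)`. -/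
def IsPureNE {n : ℕ} (a : Fin n → ℝ × ℝ) (δ : ℝ) (L₁ L₂ : Finset (Fin n)) : Prop :=
  (∀ L₁' : Finset (Fin n), (SAout a δ L₁' L₂).1 ≤ (SAout a δ L₁ L₂).1) ∧
  (∀ L₂' : Finset (Fin n), (SAout a δ L₁ L₂').2 ≤ (SAout a δ L₁ L₂).2)

noncomputable def avgf {n : ℕ} (f : Fin n → ℝ) (S : Finset (Fin n)) : ℝ :=
  (S.card : ℝ)⁻¹ * ∑ j ∈ S, f j

namespace SAhelp

variable {n : ℕ}

lemma avgf_singleton (f : Fin n → ℝ) (j : Fin n) : avgf f {j} = f j := by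
  simp [avgf]

lemma avgf_le (f : Fin n → ℝ) {S : Finset (Fin n)} (hS : S.Nonempty) {c : ℝ}
    (h : ∀ j ∈ S, f j ≤ c) : avgf f S ≤ c := by
  have hc : (0:ℝ) < S.card := by exact_mod_cast Finset.card_pos.mpr hS
  rw [avgf, inv_mul_le_iff₀ hc]
  calc ∑ j ∈ S, f j ≤ ∑ j ∈ S, c := Finset.sum_le_sum h
    _ = (S.card : ℝ) * c := by rw [Finset.sum_const, nsmul_eq_mul]

lemma le_avgf (f : Fin n → ℝ) {S : Finset (Fin n)} (hS : S.Nonempty) {c : ℝ}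
    (h : ∀ j ∈ S, c ≤ f j) : c ≤ avgf f S := by
  have hc : (0:ℝ) < S.card := by exact_mod_cast Finset.card_pos.mpr hS
  rw [avgf, le_inv_mul_iff₀ hc]
  calc (S.card : ℝ) * c = ∑ j ∈ S, c := by rw [Finset.sum_const, nsmul_eq_mul]
    _ ≤ ∑ j ∈ S, f j := Finset.sum_le_sum h

lemma sum_eq_card_avgf (f : Fin n → ℝ) {S : Finset (Fin n)} (hS : S.Nonempty) :
    ∑ j ∈ S, f j = (S.card : ℝ) * avgf f S := by
  have hc : (0:ℝ) < S.card := by exact_mod_cast Finset.card_pos.mpr hS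
  rw [avgf]; field_simp

lemma exists_avgf_le (f : Fin n → ℝ) {S : Finset (Fin n)} (hS : S.Nonempty) :
    ∃ j ∈ S, avgf f S ≤ f j := by
  by_contra h
  push_neg at h
  have h2 : ∑ j ∈ S, f j < ∑ j ∈ S, avgf f S := Finset.sum_lt_sum_of_nonempty hS h
  rw [Finset.sum_const, nsmul_eq_mul] at h2
  have h3 : ∑ j ∈ S, f j = (S.card : ℝ) * avgf f S := sum_eq_card_avgf f hS
  linarith

/-- Key superset lemma: if every member of `W` outside `U'` is at least `v = avgf f W`
and every member of `U'` outside `W` is at most `v`, then `avgf f U' ≤ v`. -/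
lemma avgf_le_of_core (f : Fin n → ℝ) {W U' : Finset (Fin n)} (hW : W.Nonempty)
    (hU' : U'.Nonempty) {v : ℝ} (hv : v = avgf f W)
    (h₁ : ∀ j ∈ W, j ∉ U' → v ≤ f j) (h₂ : ∀ j ∈ U', j ∉ W → f j ≤ v) :
    avgf f U' ≤ v := by
  have hc : (0:ℝ) < U'.card := by exact_mod_cast Finset.card_pos.mpr hU'
  rw [avgf, inv_mul_le_iff₀ hc]
  have e1 : ∑ j ∈ U' ∩ W, f j + ∑ j ∈ U' \ W, f j = ∑ j ∈ U', f j :=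
    Finset.sum_inter_add_sum_sdiff U' W f
  have e2 : ∑ j ∈ W \ (U' ∩ W), f j + ∑ j ∈ U' ∩ W, f j = ∑ j ∈ W, f j :=
    Finset.sum_sdiff (Finset.inter_subset_right)
  have hWU : W \ (U' ∩ W) = W \ U' := by
    ext x; simp only [Finset.mem_sdiff, Finset.mem_inter]; tauto
  rw [hWU] at e2
  have hsumW : ∑ j ∈ W, f j = (W.card : ℝ) * v := by rw [hv]; exact sum_eq_card_avgf f hW
  have b1 : ∑ j ∈ U' \ W, f j ≤ ((U' \ W).card : ℝ) * v := by
    calc ∑ j ∈ U' \ W, f j ≤ ∑ j ∈ U' \ W, v := by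
          apply Finset.sum_le_sum
          intro j hj
          rw [Finset.mem_sdiff] at hj
          exact h₂ j hj.1 hj.2
      _ = ((U' \ W).card : ℝ) * v := by rw [Finset.sum_const, nsmul_eq_mul]
  have b2 : ((W \ U').card : ℝ) * v ≤ ∑ j ∈ W \ U', f j := by
    calc ((W \ U').card : ℝ) * v = ∑ j ∈ W \ U', v := by rw [Finset.sum_const, nsmul_eq_mul]
      _ ≤ ∑ j ∈ W \ U', f j := by
          apply Finset.sum_le_sum
          intro j hj
          rw [Finset.mem_sdiff] at hj
          exact h₁ j hj.1 hj.2
  have c1 : ((U' ∩ W).card : ℝ) + ((U' \ W).card : ℝ) = (U'.card : ℝ) := by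
    exact_mod_cast Finset.card_inter_add_card_sdiff U' W
  have c2 : ((W ∩ U').card : ℝ) + ((W \ U').card : ℝ) = (W.card : ℝ) := by
    exact_mod_cast Finset.card_inter_add_card_sdiff W U'
  have hWint : ((W ∩ U').card : ℝ) = ((U' ∩ W).card : ℝ) := by rw [Finset.inter_comm]
  have d2 : ((U' ∩ W).card : ℝ) * v = (W.card : ℝ) * v - ((W \ U').card : ℝ) * v := by
    linear_combination v * c2 - v * hWint
  have d1 : ((U' ∩ W).card : ℝ) * v + ((U' \ W).card : ℝ) * v = (U'.card : ℝ) * v := by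
    linear_combination v * c1
  linarith

lemma avgf_insert_le (f : Fin n → ℝ) {S : Finset (Fin n)} (hS : S.Nonempty) {k : Fin n}
    (hk : k ∉ S) (h : avgf f (insert k S) ≤ avgf f S) : f k ≤ avgf f S := by
  have hc : (0:ℝ) < S.card := by exact_mod_cast Finset.card_pos.mpr hS
  have hc1 : (0:ℝ) < (S.card : ℝ) + 1 := by linarith
  have h' : ((S.card : ℝ) + 1)⁻¹ * (f k + ∑ j ∈ S, f j) ≤ (S.card : ℝ)⁻¹ * ∑ j ∈ S, f j := by
    rw [avgf, avgf, Finset.card_insert_of_notMem hk, Finset.sum_insert hk] at h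
    push_cast at h
    exact h
  rw [inv_mul_eq_div, inv_mul_eq_div, div_le_div_iff₀ hc1 hc] at h'
  rw [avgf, inv_mul_eq_div, le_div_iff₀ hc]
  nlinarith

lemma avgf_erase (f : Fin n → ℝ) {S : Finset (Fin n)} {j : Fin n} (hj : j ∈ S)
    (hne : (S.erase j).Nonempty) (h : f j ≤ avgf f S) : avgf f S ≤ avgf f (S.erase j) := by
  have hS : S.Nonempty := ⟨j, hj⟩
  have hc : (0:ℝ) < S.card := by exact_mod_cast Finset.card_pos.mpr hS
  have hc' : (0:ℝ) < (S.erase j).card := by exact_mod_cast Finset.card_pos.mpr hne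
  have hsum : ∑ x ∈ S.erase j, f x = ∑ x ∈ S, f x - f j := by
    rw [← Finset.add_sum_erase S f hj]; ring
  have hcard : ((S.erase j).card : ℝ) = (S.card : ℝ) - 1 := by
    rw [Finset.card_erase_of_mem hj]
    have h1 : 1 ≤ S.card := Finset.card_pos.mpr hS
    push_cast [Nat.cast_sub h1]
    ring
  rw [avgf, inv_mul_eq_div, le_div_iff₀ hc] at h
  rw [avgf, avgf, inv_mul_eq_div, inv_mul_eq_div, div_le_div_iff₀ hc hc', hsum, hcard]
  nlinarith

/-- Existence of a "core" subset `W`: every element of `W` is (weakly) above the average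
of `W` in at least one coordinate, and every element outside `W` is (weakly) below the
average of `W` in both coordinates. -/
lemma exists_core (f g : Fin n → ℝ) (U : Finset (Fin n)) :
    U.Nonempty →
    ∃ W, W ⊆ U ∧ W.Nonempty ∧ avgf f U ≤ avgf f W ∧ avgf g U ≤ avgf g W ∧
      (∀ j ∈ W, avgf f W ≤ f j ∨ avgf g W ≤ g j) ∧
      (∀ j ∈ U, j ∉ W → f j ≤ avgf f W ∧ g j ≤ avgf g W) := by
  induction U using Finset.strongInductionOn with
  | _ U ih =>
    intro hU
    by_cases h : ∀ j ∈ U, avgf f U ≤ f j ∨ avgf g U ≤ g j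
    · exact ⟨U, Finset.Subset.refl U, hU, le_refl _, le_refl _, h,
        fun j hj hj' => absurd hj hj'⟩
    · push_neg at h
      obtain ⟨j, hjU, hjf, hjg⟩ := h
      have hne : (U.erase j).Nonempty := by
        rcases Finset.eq_empty_or_nonempty (U.erase j) with he | hh
        · exfalso
          have hUj : U = {j} := by
            apply Finset.eq_singleton_iff_unique_mem.mpr
            refine ⟨hjU, ?_⟩
            intro x hx
            by_contra hxj
            have hmem : x ∈ U.erase j := Finset.mem_erase.mpr ⟨hxj, hx⟩
            rw [he] at hmem
            exact absurd hmem (Finset.notMem_empty x)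
          rw [hUj, avgf_singleton] at hjf
          exact absurd hjf (lt_irrefl _)
        · exact hh
      have hssub : U.erase j ⊂ U := Finset.erase_ssubset hjU
      have hf1 : avgf f U ≤ avgf f (U.erase j) := avgf_erase f hjU hne (le_of_lt hjf)
      have hg1 : avgf g U ≤ avgf g (U.erase j) := avgf_erase g hjU hne (le_of_lt hjg)
      obtain ⟨W, hWsub, hWne, hWf, hWg, hP1, hP2⟩ := ih (U.erase j) hssub hne
      refine ⟨W, hWsub.trans (Finset.erase_subset j U), hWne,
        le_trans hf1 hWf, le_trans hg1 hWg, hP1, ?_⟩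
      intro x hxU hxW
      by_cases hxj : x = j
      · subst hxj
        exact ⟨le_trans (le_of_lt hjf) (le_trans hf1 hWf),
          le_trans (le_of_lt hjg) (le_trans hg1 hWg)⟩
      · exact hP2 x (Finset.mem_erase.mpr ⟨hxj, hxU⟩) hxW

lemma avg_fst (a : Fin n → ℝ × ℝ) (S : Finset (Fin n)) :
    (avg a S).1 = avgf (fun j => (a j).1) S := by
  simp [avg, avgf, Prod.fst_sum]

lemma avg_snd (a : Fin n → ℝ × ℝ) (S : Finset (Fin n)) :
    (avg a S).2 = avgf (fun j => (a j).2) S := by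
  simp [avg, avgf, Prod.snd_sum]

lemma SAout_fst_empty (a : Fin n → ℝ × ℝ) (δ : ℝ) {L₁ L₂ : Finset (Fin n)}
    (h : L₁ ∩ L₂ = ∅) (hU : L₁ ∪ L₂ ≠ ∅) :
    (SAout a δ L₁ L₂).1 = avgf (fun j => (a j).1) (L₁ ∪ L₂) := by
  rw [SAout, if_pos h, if_neg hU, avg_fst]

lemma SAout_fst_inter (a : Fin n → ℝ × ℝ) (δ : ℝ) {L₁ L₂ : Finset (Fin n)}
    (h : L₁ ∩ L₂ ≠ ∅) :
    (SAout a δ L₁ L₂).1 = (1 - δ) * avgf (fun j => (a j).1) (L₁ ∩ L₂)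
      + δ * avgf (fun j => (a j).1) (L₁ ∪ L₂) := by
  rw [SAout, if_neg h]
  simp [Prod.fst_add, avg_fst, smul_eq_mul]

lemma SAout_snd_swap (a : Fin n → ℝ × ℝ) (δ : ℝ) (L₁ L₂ : Finset (Fin n)) :
    (SAout a δ L₁ L₂).2 = (SAout (fun j => ((a j).2, (a j).1)) δ L₂ L₁).1 := by
  have havg : ∀ S : Finset (Fin n),
      (avg (fun j => ((a j).2, (a j).1)) S).1 = (avg a S).2 := by
    intro S
    rw [avg_fst, avg_snd]
  rw [SAout, SAout, Finset.inter_comm L₂ L₁, Finset.union_comm L₂ L₁]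
  split_ifs with h1 h2
  · rw [havg]
  · rw [havg]
  · simp only [Prod.snd_add, Prod.fst_add, Prod.smul_snd, Prod.smul_fst, smul_eq_mul, havg]

/-- Bound on every deviation of player 1. -/
lemma dev_bound (a : Fin n → ℝ × ℝ) (δ : ℝ) (hδ0 : 0 ≤ δ) (hδ1 : δ ≤ 1)
    {W L₂ : Finset (Fin n)} (hL₂W : L₂ ⊆ W) (hL₂ : L₂.Nonempty) (hWne : W.Nonempty)
    {c : ℝ}
    (hvc : avgf (fun j => (a j).1) W ≤ c)
    (hc : ∀ j ∈ L₂, (a j).1 ≤ c)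
    (hout : ∀ j ∈ W, j ∉ L₂ → avgf (fun j => (a j).1) W ≤ (a j).1)
    (hP2 : ∀ j, j ∉ W → (a j).1 ≤ avgf (fun j => (a j).1) W) :
    ∀ L₁', (SAout a δ L₁' L₂).1 ≤ (1 - δ) * c + δ * avgf (fun j => (a j).1) W := by
  intro L₁'
  set F := fun j => (a j).1 with hF
  set v := avgf F W with hv
  have hU'ne : (L₁' ∪ L₂).Nonempty := hL₂.mono Finset.subset_union_right
  have hUle : avgf F (L₁' ∪ L₂) ≤ v := by
    apply avgf_le_of_core F hWne hU'ne hv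
    · intro j hjW hjU
      exact hout j hjW (fun hj => hjU (Finset.mem_union_right _ hj))
    · intro j _ hjW
      exact hP2 j hjW
  by_cases hI : L₁' ∩ L₂ = ∅
  · rw [SAout_fst_empty a δ hI (Finset.nonempty_iff_ne_empty.mp hU'ne)]
    calc avgf F (L₁' ∪ L₂) ≤ v := hUle
      _ ≤ (1 - δ) * c + δ * v := by nlinarith
  · rw [SAout_fst_inter a δ hI]
    have hIne : (L₁' ∩ L₂).Nonempty := Finset.nonempty_iff_ne_empty.mpr hI
    have hTle : avgf F (L₁' ∩ L₂) ≤ c := by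
      apply avgf_le F hIne
      intro j hj
      exact hc j (Finset.mem_of_mem_inter_right hj)
    have hT0 : (0:ℝ) ≤ 1 - δ := by linarith
    calc (1 - δ) * avgf F (L₁' ∩ L₂) + δ * avgf F (L₁' ∪ L₂)
        ≤ (1 - δ) * c + δ * v := by
          apply add_le_add
          · exact mul_le_mul_of_nonneg_left hTle hT0
          · exact mul_le_mul_of_nonneg_left hUle hδ0


lemma exists_NE (n : ℕ) (hn : 1 ≤ n) (a : Fin n → ℝ × ℝ)
    (ha : ∀ k, (a k).1 ∈ Set.Icc (0:ℝ) 1 ∧ (a k).2 ∈ Set.Icc (0:ℝ) 1)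
    (δ : ℝ) (hδ0 : 0 < δ) (hδ1 : δ ≤ 1) :
    ∃ L₁ L₂ : Finset (Fin n), IsPureNE a δ L₁ L₂ := by
  have hnem : Nonempty (Fin n) := ⟨⟨0, hn⟩⟩
  have huniv : (Finset.univ : Finset (Fin n)).Nonempty := Finset.univ_nonempty
  set F := fun j => (a j).1 with hF
  set G := fun j => (a j).2 with hG
  set a' := fun j => ((a j).2, (a j).1) with ha'
  obtain ⟨W, _, hWne, _, _, hP1, hP2'⟩ := exists_core F G Finset.univ huniv
  set v₁ := avgf F W with hv₁
  set v₂ := avgf G W with hv₂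
  have hP2 : ∀ j, j ∉ W → F j ≤ v₁ ∧ G j ≤ v₂ := fun j hj => hP2' j (Finset.mem_univ j) hj
  set D := W.filter (fun j => v₁ ≤ F j ∧ v₂ ≤ G j) with hD
  by_cases hDne : D.Nonempty
  · -- there is an element of W above average in both coordinates
    obtain ⟨t, htD, htmax⟩ := Finset.exists_max_image D (fun j => F j + G j) hDne
    rw [hD, Finset.mem_filter] at htD
    obtain ⟨htW, htf, htg⟩ := htD
    set A := (W.erase t).filter (fun j => v₁ ≤ F j ∧ G j ≤ G t) with hA
    set B := (W.erase t).filter (fun j => ¬(v₁ ≤ F j ∧ G j ≤ G t)) with hB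
    have htA : t ∉ A := fun h => (Finset.mem_erase.mp (Finset.mem_of_mem_filter t h)).1 rfl
    have htB : t ∉ B := fun h => (Finset.mem_erase.mp (Finset.mem_of_mem_filter t h)).1 rfl
    have hAW : A ⊆ W := Finset.Subset.trans (Finset.filter_subset _ _) (Finset.erase_subset t W)
    have hBW : B ⊆ W := Finset.Subset.trans (Finset.filter_subset _ _) (Finset.erase_subset t W)
    have hAprop : ∀ j ∈ A, v₁ ≤ F j ∧ G j ≤ G t := by
      intro j hj; exact (Finset.mem_filter.mp hj).2
    have hBprop : ∀ j ∈ B, v₂ ≤ G j ∧ F j ≤ F t := by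
      intro j hj
      rw [hB, Finset.mem_filter, Finset.mem_erase] at hj
      obtain ⟨⟨hjt, hjW⟩, hcond⟩ := hj
      by_cases h1 : v₁ ≤ F j
      · have hGj : G t < G j := by
          by_contra hh
          push_neg at hh
          exact hcond ⟨h1, hh⟩
        have hjD : j ∈ D := by
          rw [hD, Finset.mem_filter]
          exact ⟨hjW, h1, le_trans htg (le_of_lt hGj)⟩
        have hsum := htmax j hjD
        exact ⟨le_trans htg (le_of_lt hGj), by linarith⟩
      · have h2 : v₂ ≤ G j := (hP1 j hjW).resolve_left h1
        exact ⟨h2, le_trans (le_of_lt (lt_of_not_ge h1)) htf⟩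
    set L₁ := insert t A with hL₁
    set L₂ := insert t B with hL₂
    have hABdisj : ∀ x, x ∈ A → x ∈ B → False := by
      intro x hxA hxB
      exact (Finset.mem_filter.mp hxB).2 (Finset.mem_filter.mp hxA).2
    have hinter : L₁ ∩ L₂ = {t} := by
      ext x
      simp only [hL₁, hL₂, Finset.mem_inter, Finset.mem_insert, Finset.mem_singleton]
      constructor
      · rintro ⟨hx1, hx2⟩
        rcases hx1 with rfl | hx1
        · rfl
        rcases hx2 with rfl | hx2
        · rfl
        · exact absurd (hABdisj x hx1 hx2) (fun h => h)
      · rintro rfl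
        exact ⟨Or.inl rfl, Or.inl rfl⟩
    have hunion : L₁ ∪ L₂ = W := by
      have hAB : A ∪ B = W.erase t := Finset.filter_union_filter_not_eq _ _
      ext x
      simp only [hL₁, hL₂, Finset.mem_union, Finset.mem_insert]
      constructor
      · rintro (⟨rfl | hx⟩ | ⟨rfl | hx⟩)
        · exact htW
        · exact hAW hx
        · exact htW
        · exact hBW hx
      · intro hxW
        by_cases hxt : x = t
        · exact Or.inl (Or.inl hxt)
        · have : x ∈ A ∪ B := by rw [hAB]; exact Finset.mem_erase.mpr ⟨hxt, hxW⟩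
          rcases Finset.mem_union.mp this with h | h
          · exact Or.inl (Or.inr h)
          · exact Or.inr (Or.inr h)
    have hinterne : L₁ ∩ L₂ ≠ ∅ := by
      rw [hinter]
      exact Finset.singleton_ne_empty t
    have hout1 : (SAout a δ L₁ L₂).1 = (1 - δ) * F t + δ * v₁ := by
      rw [SAout_fst_inter a δ hinterne, hinter, hunion, avgf_singleton]
    have hout2 : (SAout a δ L₁ L₂).2 = (1 - δ) * G t + δ * v₂ := by
      rw [SAout_snd_swap, SAout_fst_inter a' δ (by rwa [Finset.inter_comm]),
        Finset.inter_comm, Finset.union_comm, hinter, hunion]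
      rw [avgf_singleton]
    refine ⟨L₁, L₂, ?_, ?_⟩
    · -- player 1
      intro L₁'
      rw [hout1]
      apply dev_bound a δ (le_of_lt hδ0) hδ1 (Finset.insert_subset htW hBW)
        ⟨t, Finset.mem_insert_self t B⟩ hWne htf
      · intro j hj
        rcases Finset.mem_insert.mp hj with rfl | hj
        · exact le_refl _
        · exact (hBprop j hj).2
      · intro j hjW hjL₂
        have hjt : j ≠ t := fun h => hjL₂ (h ▸ Finset.mem_insert_self t B)
        have hjnB : j ∉ B := fun h => hjL₂ (Finset.mem_insert_of_mem h)
        have hjA : j ∈ A := by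
          have : j ∈ A ∪ B := by
            rw [Finset.filter_union_filter_not_eq]
            exact Finset.mem_erase.mpr ⟨hjt, hjW⟩
          exact (Finset.mem_union.mp this).resolve_right hjnB
        exact (hAprop j hjA).1
      · intro j hj
        exact (hP2 j hj).1
    · -- player 2
      intro L₂'
      rw [hout2, SAout_snd_swap]
      apply dev_bound a' δ (le_of_lt hδ0) hδ1 (Finset.insert_subset htW hAW)
        ⟨t, Finset.mem_insert_self t A⟩ hWne htg
      · intro j hj
        rcases Finset.mem_insert.mp hj with rfl | hj
        · exact le_refl _
        · exact (hAprop j hj).2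
      · intro j hjW hjL₁
        have hjt : j ≠ t := fun h => hjL₁ (h ▸ Finset.mem_insert_self t A)
        have hjnA : j ∉ A := fun h => hjL₁ (Finset.mem_insert_of_mem h)
        have hjB : j ∈ B := by
          have : j ∈ A ∪ B := by
            rw [Finset.filter_union_filter_not_eq]
            exact Finset.mem_erase.mpr ⟨hjt, hjW⟩
          exact (Finset.mem_union.mp this).resolve_left hjnA
        exact (hBprop j hjB).1
      · intro j hj
        exact (hP2 j hj).2
  · -- no element of W is above average in both coordinates
    have hD' : ∀ j ∈ W, ¬(v₁ ≤ F j ∧ v₂ ≤ G j) := by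
      intro j hjW hcond
      exact hDne ⟨j, by rw [hD, Finset.mem_filter]; exact ⟨hjW, hcond⟩⟩
    set L₁ := W.filter (fun j => v₁ ≤ F j) with hL₁
    set L₂ := W.filter (fun j => ¬(v₁ ≤ F j)) with hL₂
    have hL₁W : L₁ ⊆ W := Finset.filter_subset _ _
    have hL₂W : L₂ ⊆ W := Finset.filter_subset _ _
    have hL₁prop : ∀ j ∈ L₁, v₁ ≤ F j ∧ G j ≤ v₂ := by
      intro j hj
      obtain ⟨hjW, h1⟩ := Finset.mem_filter.mp hj
      refine ⟨h1, ?_⟩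
      by_contra hh
      push_neg at hh
      exact hD' j hjW ⟨h1, le_of_lt hh⟩
    have hL₂prop : ∀ j ∈ L₂, F j ≤ v₁ ∧ v₂ ≤ G j := by
      intro j hj
      obtain ⟨hjW, h1⟩ := Finset.mem_filter.mp hj
      exact ⟨le_of_lt (lt_of_not_ge h1), (hP1 j hjW).resolve_left h1⟩
    have hL₁ne : L₁.Nonempty := by
      obtain ⟨j, hjW, hjf⟩ := exists_avgf_le F hWne
      exact ⟨j, Finset.mem_filter.mpr ⟨hjW, hjf⟩⟩
    have hL₂ne : L₂.Nonempty := by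
      obtain ⟨j, hjW, hjg⟩ := exists_avgf_le G hWne
      refine ⟨j, Finset.mem_filter.mpr ⟨hjW, ?_⟩⟩
      intro h1
      exact hD' j hjW ⟨h1, hjg⟩
    have hinter : L₁ ∩ L₂ = ∅ := by
      ext x
      simp only [hL₁, hL₂, Finset.mem_inter, Finset.mem_filter, Finset.notMem_empty,
        iff_false]
      rintro ⟨⟨_, h1⟩, ⟨_, h2⟩⟩
      exact h2 h1
    have hunion : L₁ ∪ L₂ = W := Finset.filter_union_filter_not_eq _ _
    have hUne : L₁ ∪ L₂ ≠ ∅ := by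
      rw [hunion]
      exact Finset.nonempty_iff_ne_empty.mp hWne
    have hout1 : (SAout a δ L₁ L₂).1 = v₁ := by
      rw [SAout_fst_empty a δ hinter hUne, hunion]
    have hout2 : (SAout a δ L₁ L₂).2 = v₂ := by
      rw [SAout_snd_swap, SAout_fst_empty a' δ (by rwa [Finset.inter_comm])
        (by rwa [Finset.union_comm]), Finset.union_comm, hunion]
    refine ⟨L₁, L₂, ?_, ?_⟩
    · intro L₁'
      rw [hout1]
      have hb := dev_bound a δ (le_of_lt hδ0) hδ1 hL₂W hL₂ne hWne (le_refl v₁)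
        (fun j hj => (hL₂prop j hj).1)
        (fun j hjW hjL₂ => by
          have hjL₁ : j ∈ L₁ := by
            have : j ∈ L₁ ∪ L₂ := by rw [hunion]; exact hjW
            exact (Finset.mem_union.mp this).resolve_right hjL₂
          exact (hL₁prop j hjL₁).1)
        (fun j hj => (hP2 j hj).1) L₁'
      calc (SAout a δ L₁' L₂).1 ≤ (1 - δ) * v₁ + δ * v₁ := hb
        _ = v₁ := by ring
    · intro L₂'
      rw [hout2, SAout_snd_swap]
      have hb := dev_bound a' δ (le_of_lt hδ0) hδ1 hL₁W hL₁ne hWne (le_refl v₂)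
        (fun j hj => (hL₁prop j hj).2)
        (fun j hjW hjL₁ => by
          have hjL₂ : j ∈ L₂ := by
            have : j ∈ L₁ ∪ L₂ := by rw [hunion]; exact hjW
            exact (Finset.mem_union.mp this).resolve_left hjL₁
          exact (hL₂prop j hjL₂).2)
        (fun j hj => (hP2 j hj).2) L₂'
      calc (SAout a' δ L₂' L₁).1 ≤ (1 - δ) * v₂ + δ * v₂ := hb
        _ = v₂ := by ring


/-- If player 1 could gain more than `δ` from alternative `k` (with `k ∈ L₂` or
`k` outside both lists), the profile is not an equilibrium. -/
lemma half_false (a : Fin n → ℝ × ℝ) (δ : ℝ) (hδ0 : 0 < δ) (hδ1 : δ ≤ 1)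
    (ha : ∀ k, (a k).1 ∈ Set.Icc (0:ℝ) 1 ∧ (a k).2 ∈ Set.Icc (0:ℝ) 1)
    (L₁ L₂ : Finset (Fin n))
    (h₁ : ∀ L₁', (SAout a δ L₁' L₂).1 ≤ (SAout a δ L₁ L₂).1)
    (k : Fin n) (hk : (SAout a δ L₁ L₂).1 + δ < (a k).1)
    (hmem : k ∈ L₂ ∨ k ∉ L₁ ∪ L₂) : False := by
  set F := fun j => (a j).1 with hF
  have hF0 : ∀ j, 0 ≤ F j := fun j => (ha j).1.1
  have hF1 : ∀ j, F j ≤ 1 := fun j => (ha j).1.2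
  by_cases hL₂e : L₂ = ∅
  · subst hL₂e
    have hsing : (SAout a δ {k} ∅).1 = F k := by
      rw [SAout, if_pos (Finset.inter_empty {k}), Finset.union_empty,
        if_neg (Finset.singleton_ne_empty k), avg_fst, avgf_singleton]
    have := h₁ {k}
    rw [hsing] at this
    linarith
  · have hL₂ne : L₂.Nonempty := Finset.nonempty_iff_ne_empty.mpr hL₂e
    have hUne : (L₁ ∪ L₂).Nonempty := hL₂ne.mono Finset.subset_union_right
    have hkU' : k ∉ L₁ ∪ L₂ → k ∉ L₂ := fun h hk' => h (Finset.mem_union_right _ hk')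
    by_cases hT : L₁ ∩ L₂ = ∅
    · have ho : (SAout a δ L₁ L₂).1 = avgf F (L₁ ∪ L₂) :=
        SAout_fst_empty a δ hT (Finset.nonempty_iff_ne_empty.mp hUne)
      have ho0 : 0 ≤ avgf F (L₁ ∪ L₂) := le_avgf F hUne (fun j _ => hF0 j)
      have hδlt : δ < 1 := by
        have := hF1 k
        rw [ho] at hk
        linarith
      rcases hmem with hkL₂ | hkU
      · set L₁' := insert k (L₁ \ L₂) with hL₁'
        have hi : L₁' ∩ L₂ = {k} := by
          ext x
          simp only [hL₁', Finset.mem_inter, Finset.mem_insert, Finset.mem_sdiff,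
            Finset.mem_singleton]
          constructor
          · rintro ⟨rfl | ⟨_, hx2⟩, hx3⟩
            · rfl
            · exact absurd hx3 hx2
          · rintro rfl
            exact ⟨Or.inl rfl, hkL₂⟩
        have hu : L₁' ∪ L₂ = L₁ ∪ L₂ := by
          ext x
          simp only [hL₁', Finset.mem_union, Finset.mem_insert, Finset.mem_sdiff]
          constructor
          · rintro (⟨rfl | ⟨hx, _⟩⟩ | hx)
            · exact Or.inr hkL₂
            · exact Or.inl hx
            · exact Or.inr hx
          · intro hx
            by_cases hxL₂ : x ∈ L₂
            · exact Or.inr hxL₂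
            · exact Or.inl (Or.inr ⟨hx.resolve_right hxL₂, hxL₂⟩)
        have hdev := h₁ L₁'
        rw [SAout_fst_inter a δ (by rw [hi]; exact Finset.singleton_ne_empty k),
          hi, hu, avgf_singleton, ho] at hdev
        rw [ho] at hk
        nlinarith
      · have hkL₂ : k ∉ L₂ := hkU' hkU
        set L₁' := insert k L₁ with hL₁'
        have hi : L₁' ∩ L₂ = ∅ := by
          ext x
          simp only [hL₁', Finset.mem_inter, Finset.mem_insert, Finset.notMem_empty,
            iff_false]
          rintro ⟨rfl | hx1, hx2⟩
          · exact hkL₂ hx2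
          · have : x ∈ L₁ ∩ L₂ := Finset.mem_inter.mpr ⟨hx1, hx2⟩
            rw [hT] at this
            exact Finset.notMem_empty x this
        have hu : L₁' ∪ L₂ = insert k (L₁ ∪ L₂) := by
          ext x
          simp only [hL₁', Finset.mem_union, Finset.mem_insert]
          tauto
        have hune : L₁' ∪ L₂ ≠ ∅ := by
          rw [hu]
          exact Finset.insert_ne_empty k (L₁ ∪ L₂)
        have hdev := h₁ L₁'
        rw [SAout_fst_empty a δ hi hune, hu, ho] at hdev
        have hkb : F k ≤ avgf F (L₁ ∪ L₂) := avgf_insert_le F hUne hkU hdev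
        rw [ho] at hk
        linarith
    · have hTne : (L₁ ∩ L₂).Nonempty := Finset.nonempty_iff_ne_empty.mpr hT
      set α := avgf F (L₁ ∩ L₂) with hα
      set β := avgf F (L₁ ∪ L₂) with hβ
      have ho : (SAout a δ L₁ L₂).1 = (1 - δ) * α + δ * β := SAout_fst_inter a δ hT
      have hα0 : 0 ≤ α := le_avgf F hTne (fun j _ => hF0 j)
      have hα1 : α ≤ 1 := avgf_le F hTne (fun j _ => hF1 j)
      have hβ0 : 0 ≤ β := le_avgf F hUne (fun j _ => hF0 j)
      have hβ1 : β ≤ 1 := avgf_le F hUne (fun j _ => hF1 j)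
      have hδlt : δ < 1 := by
        have := hF1 k
        rw [ho] at hk
        nlinarith
      rcases hmem with hkL₂ | hkU
      · set L₁' := insert k ((L₁ ∪ L₂) \ L₂) with hL₁'
        have hi : L₁' ∩ L₂ = {k} := by
          ext x
          simp only [hL₁', Finset.mem_inter, Finset.mem_insert, Finset.mem_sdiff,
            Finset.mem_union, Finset.mem_singleton]
          constructor
          · rintro ⟨rfl | ⟨_, hx2⟩, hx3⟩
            · rfl
            · exact absurd hx3 hx2
          · rintro rfl
            exact ⟨Or.inl rfl, hkL₂⟩
        have hu : L₁' ∪ L₂ = L₁ ∪ L₂ := by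
          ext x
          simp only [hL₁', Finset.mem_union, Finset.mem_insert, Finset.mem_sdiff,
            Finset.mem_union]
          constructor
          · rintro (⟨rfl | ⟨hx, _⟩⟩ | hx)
            · exact Or.inr hkL₂
            · exact hx
            · exact Or.inr hx
          · intro hx
            by_cases hxL₂ : x ∈ L₂
            · exact Or.inr hxL₂
            · exact Or.inl (Or.inr ⟨hx, hxL₂⟩)
        have hdev := h₁ L₁'
        rw [SAout_fst_inter a δ (by rw [hi]; exact Finset.singleton_ne_empty k),
          hi, hu, avgf_singleton, ho] at hdev
        rw [ho] at hk
        -- hdev : (1-δ) F k + δ β ≤ (1-δ) α + δ β, hence F k ≤ α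
        have hFkα : F k ≤ α := by nlinarith
        nlinarith
      · have hkL₂ : k ∉ L₂ := hkU' hkU
        set L₁' := insert k L₁ with hL₁'
        have hi : L₁' ∩ L₂ = L₁ ∩ L₂ := by
          ext x
          simp only [hL₁', Finset.mem_inter, Finset.mem_insert]
          constructor
          · rintro ⟨rfl | hx1, hx2⟩
            · exact absurd hx2 hkL₂
            · exact ⟨hx1, hx2⟩
          · rintro ⟨hx1, hx2⟩
            exact ⟨Or.inr hx1, hx2⟩
        have hu : L₁' ∪ L₂ = insert k (L₁ ∪ L₂) := by
          ext x
          simp only [hL₁', Finset.mem_union, Finset.mem_insert]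
          tauto
        have hdev := h₁ L₁'
        rw [SAout_fst_inter a δ (by rw [hi]; exact hT), hi, hu, ho] at hdev
        have hins : avgf F (insert k (L₁ ∪ L₂)) ≤ β := by nlinarith
        have hkb : F k ≤ β := avgf_insert_le F hUne hkU hins
        -- second deviation: drop the intersection
        set L₁'' := (L₁ ∪ L₂) \ L₂ with hL₁''
        have hi2 : L₁'' ∩ L₂ = ∅ := by
          ext x
          simp only [hL₁'', Finset.mem_inter, Finset.mem_sdiff, Finset.notMem_empty,
            iff_false]
          rintro ⟨⟨_, hx2⟩, hx3⟩
          exact hx2 hx3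
        have hu2 : L₁'' ∪ L₂ = L₁ ∪ L₂ := by
          rw [hL₁'', Finset.sdiff_union_self_eq_union]
          rw [Finset.union_eq_left.mpr Finset.subset_union_right]
        have hdev2 := h₁ L₁''
        rw [SAout_fst_empty a δ hi2 (by rw [hu2]; exact Finset.nonempty_iff_ne_empty.mp hUne),
          hu2, ho] at hdev2
        rw [ho] at hk
        linarith

end SAhelp

/-- The mechanism `SA_δ` admits a pure Nash equilibrium for every collection, and
every pure Nash equilibrium outcome is `δ`-Pareto efficient. -/
theorem SA_exists_pure_NE_and_delta_pareto_efficient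
    (n : ℕ) (hn : 1 ≤ n) (a : Fin n → ℝ × ℝ)
    (ha : ∀ k, (a k).1 ∈ Set.Icc (0:ℝ) 1 ∧ (a k).2 ∈ Set.Icc (0:ℝ) 1)
    (δ : ℝ) (hδ0 : 0 < δ) (hδ1 : δ ≤ 1) :
    (∃ L₁ L₂ : Finset (Fin n), IsPureNE a δ L₁ L₂) ∧
    (∀ L₁ L₂ : Finset (Fin n), IsPureNE a δ L₁ L₂ →
      ¬ ∃ k : Fin n, (a k).1 > (SAout a δ L₁ L₂).1 + δ ∧
        (a k).2 > (SAout a δ L₁ L₂).2 + δ) := by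
  constructor
  · exact SAhelp.exists_NE n hn a ha δ hδ0 hδ1
  · rintro L₁ L₂ ⟨h₁, h₂⟩ ⟨k, hk1, hk2⟩
    set a' := fun j => ((a j).2, (a j).1) with ha'
    have ha'b : ∀ k, (a' k).1 ∈ Set.Icc (0:ℝ) 1 ∧ (a' k).2 ∈ Set.Icc (0:ℝ) 1 :=
      fun k => ⟨(ha k).2, (ha k).1⟩
    have h₂' : ∀ L₂', (SAout a' δ L₂' L₁).1 ≤ (SAout a' δ L₂ L₁).1 := by
      intro L₂'
      rw [← SAhelp.SAout_snd_swap, ← SAhelp.SAout_snd_swap]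
      exact h₂ L₂'
    by_cases hkL₂ : k ∈ L₂
    · exact SAhelp.half_false a δ hδ0 hδ1 ha L₁ L₂ h₁ k hk1 (Or.inl hkL₂)
    · by_cases hkL₁ : k ∈ L₁
      · apply SAhelp.half_false a' δ hδ0 hδ1 ha'b L₂ L₁ h₂' k _ (Or.inl hkL₁)
        rw [← SAhelp.SAout_snd_swap]
        exact hk2
      · refine SAhelp.half_false a δ hδ0 hδ1 ha L₁ L₂ h₁ k hk1 (Or.inr ?_)
        intro hmem
        rcases Finset.mem_union.mp hmem with h | h
        · exact hkL₁ h
        · exact hkL₂ h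
end

section
/- Let a : Fin n → [0,1]² be a collection, let x be an average fixed point of the collection witnessed by a boundary set B ⊆ A_{≤,≤}(x) \ A_{<,<}(x), and let B₂ = {k ∈ B : a^k_2 = x_2}. Suppose S₂ ⊆ Fin n contains every index in {k : a^k_1 < x_1 ∧ a^k_2 > x_2} ∪ B₂ and contains no index of A_{≤,≤}(x) \ B₂. Then the maximum over all S₁ ⊆ Fin n (with S₁ ∪ S₂ nonempty) of the first coordinate of avg(S₁ ∪ S₂) equals x_1. -/
open Finset

attribute [local instance] Classical.propDecidable

/-- If `x` is an average fixed point witnessed by the boundary set `B`, and `S₂` is a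
list of player 2 that includes all the alternatives in `A_{<,>}(x) ∪ B₂` and excludes
all the alternatives in `A_{≤,≤}(x) \ B₂`, then the maximal first coordinate of
`avg (S₁ ∪ S₂)` over all lists `S₁` of player 1 equals `x₁`. -/
theorem max_disagreement_payoff
    (n : ℕ) (a : Fin n → ℝ × ℝ)
    (ha : ∀ k, (a k).1 ∈ Set.Icc (0:ℝ) 1 ∧ (a k).2 ∈ Set.Icc (0:ℝ) 1)
    (x : ℝ × ℝ) (B : Finset (Fin n))
    (hB : B ⊆ Ale a x \ Alt a x)
    (hne : ((Finset.univ \ Ale a x) ∪ B).Nonempty)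
    (havg : avg a ((Finset.univ \ Ale a x) ∪ B) = x)
    (S₂ : Finset (Fin n))
    (hin : ∀ k : Fin n,
      ((a k).1 < x.1 ∧ (a k).2 > x.2) ∨ (k ∈ B ∧ (a k).2 = x.2) → k ∈ S₂)
    (hout : ∀ k : Fin n, k ∈ Ale a x → ¬ (k ∈ B ∧ (a k).2 = x.2) → k ∉ S₂) :
    IsGreatest
      {v : ℝ | ∃ S₁ : Finset (Fin n), (S₁ ∪ S₂).Nonempty ∧ v = (avg a (S₁ ∪ S₂)).1}
      x.1 := by
  classical
  set T : Finset (Fin n) := (Finset.univ \ Ale a x) ∪ B with hT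
  set f : Fin n → ℝ := fun k => (a k).1 - x.1 with hfdef
  have hS₂T : S₂ ⊆ T := by
    intro k hk
    by_cases hA : k ∈ Ale a x
    · by_cases h : k ∈ B ∧ (a k).2 = x.2
      · exact Finset.mem_union_right _ h.1
      · exact absurd hk (hout k hA h)
    · exact Finset.mem_union_left _ (Finset.mem_sdiff.mpr ⟨Finset.mem_univ k, hA⟩)
  have hTcard : (0:ℝ) < T.card := by exact_mod_cast Finset.card_pos.mpr hne
  have hsumT : ∑ k ∈ T, f k = 0 := by
    have h1 : (T.card : ℝ)⁻¹ * ∑ k ∈ T, (a k).1 = x.1 := by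
      have := congrArg Prod.fst havg
      simpa [avg, Prod.fst_sum] using this
    have h2 : ∑ k ∈ T, (a k).1 = T.card * x.1 := by
      field_simp at h1; linarith
    simp only [hfdef, Finset.sum_sub_distrib, Finset.sum_const, nsmul_eq_mul, h2]
    ring
  set P : Finset (Fin n) := Finset.univ.filter (fun k => 0 < f k) with hP
  set N : Finset (Fin n) := S₂.filter (fun k => f k < 0) with hN
  have hPT : P ⊆ T := by
    intro k hk
    simp only [hP, Finset.mem_filter, hfdef] at hk
    refine Finset.mem_union_left _ (Finset.mem_sdiff.mpr ⟨Finset.mem_univ k, ?_⟩)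
    simp only [Ale, Finset.mem_filter, Finset.mem_univ, true_and]
    intro h; linarith [h.1, hk.2]
  have hNeq : T.filter (fun k => f k < 0) = N := by
    apply Finset.Subset.antisymm
    · intro k hk
      simp only [Finset.mem_filter, hfdef] at hk
      obtain ⟨hkT, hkneg⟩ := hk
      have hk1 : (a k).1 < x.1 := by linarith
      have hkS₂ : k ∈ S₂ := by
        rcases Finset.mem_union.mp hkT with h | h
        · have hA : k ∉ Ale a x := (Finset.mem_sdiff.mp h).2
          have h2 : x.2 < (a k).2 := by
            by_contra hc
            exact hA (by simp [Ale, le_of_lt hk1, le_of_not_gt hc])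
          exact hin k (Or.inl ⟨hk1, h2⟩)
        · have hb := hB h
          rw [Finset.mem_sdiff] at hb
          have h2 : (a k).2 = x.2 := by
            have hle := (Finset.mem_filter.mp hb.1).2.2
            have : ¬ ((a k).1 < x.1 ∧ (a k).2 < x.2) := by
              intro hc; exact hb.2 (by simp [Alt, hc])
            by_contra hne2
            exact this ⟨hk1, lt_of_le_of_ne hle hne2⟩
          exact hin k (Or.inr ⟨h, h2⟩)
      exact Finset.mem_filter.mpr ⟨hkS₂, hkneg⟩
    · intro k hk
      simp only [hN, Finset.mem_filter] at hk
      exact Finset.mem_filter.mpr ⟨hS₂T hk.1, hk.2⟩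
  have hPeq : T.filter (fun k => 0 < f k) = P := by
    apply Finset.Subset.antisymm
    · intro k hk
      simp only [Finset.mem_filter] at hk
      simp [hP, hk.2]
    · intro k hk
      exact Finset.mem_filter.mpr ⟨hPT hk, (Finset.mem_filter.mp hk).2⟩
  have hPN : ∑ k ∈ P, f k + ∑ k ∈ N, f k = 0 := by
    have hsplit : ∑ k ∈ T.filter (fun k => 0 < f k), f k
        + ∑ k ∈ T.filter (fun k => ¬ 0 < f k), f k = ∑ k ∈ T, f k :=
      Finset.sum_filter_add_sum_filter_not _ _ _
    have hz : ∑ k ∈ T.filter (fun k => ¬ 0 < f k), f k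
        = ∑ k ∈ T.filter (fun k => f k < 0), f k := by
      rw [← Finset.sum_filter_add_sum_filter_not (T.filter (fun k => ¬ 0 < f k)) (fun k => f k < 0)]
      have hzz : ∑ k ∈ (T.filter (fun k => ¬ 0 < f k)).filter (fun k => ¬ f k < 0), f k = 0 := by
        apply Finset.sum_eq_zero
        intro k hk
        simp only [Finset.mem_filter] at hk
        linarith [hk.1.2, hk.2]
      rw [hzz, add_zero]
      congr 1
      rw [Finset.filter_filter]
      apply Finset.filter_congr
      intro k _
      constructor
      · exact fun h => h.2
      · exact fun h => ⟨not_lt.mpr (le_of_lt h), h⟩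
    rw [hz, hNeq, hPeq] at hsplit
    rw [hsplit, hsumT]
  -- upper bound
  have hub : ∀ S : Finset (Fin n), S₂ ⊆ S → S.Nonempty → (avg a S).1 ≤ x.1 := by
    intro S hS₂S hSne
    have hsum : ∑ k ∈ S, f k ≤ 0 := by
      have hpos : ∑ k ∈ S.filter (fun k => 0 < f k), f k ≤ ∑ k ∈ P, f k := by
        apply Finset.sum_le_sum_of_subset_of_nonneg
        · intro k hk; simp [hP, (Finset.mem_filter.mp hk).2]
        · intro k hk _
          exact le_of_lt (Finset.mem_filter.mp hk).2
      have hneg : ∑ k ∈ S.filter (fun k => ¬ 0 < f k), f k ≤ ∑ k ∈ N, f k := by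
        have hsub : N ⊆ S.filter (fun k => ¬ 0 < f k) := by
          intro k hk
          simp only [hN, Finset.mem_filter] at hk
          exact Finset.mem_filter.mpr ⟨hS₂S hk.1, not_lt.mpr (le_of_lt hk.2)⟩
        have := Finset.sum_le_sum_of_subset_of_nonneg hsub
          (f := fun k => -f k) ?_
        · simpa using this
        · intro k hk _
          simp only [Finset.mem_filter] at hk
          simpa using not_lt.mp hk.2
      have := Finset.sum_filter_add_sum_filter_not S (fun k => 0 < f k) f
      linarith
    have hScard : (0:ℝ) < S.card := by exact_mod_cast Finset.card_pos.mpr hSne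
    have hsum1 : ∑ k ∈ S, (a k).1 ≤ S.card * x.1 := by
      have : ∑ k ∈ S, f k = ∑ k ∈ S, (a k).1 - S.card * x.1 := by
        simp [hfdef, Finset.sum_sub_distrib]
      linarith [hsum, this ▸ hsum]
    have : (avg a S).1 = (S.card : ℝ)⁻¹ * ∑ k ∈ S, (a k).1 := by
      simp [avg, Prod.fst_sum]
    rw [this]
    rw [inv_mul_le_iff₀ hScard]
    linarith
  constructor
  · refine ⟨T, ?_, ?_⟩
    · rw [Finset.union_comm, Finset.union_eq_right.mpr hS₂T]; exact hne
    · rw [Finset.union_comm, Finset.union_eq_right.mpr hS₂T, havg]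
  · rintro v ⟨S₁, hSne, rfl⟩
    exact hub (S₁ ∪ S₂) Finset.subset_union_right hSne
end

section
/- Let a : Fin n → [0,1]² be a collection, k ≥ 1, and let k-UN(A) be the set of all points of the form (1/k)·Σ_{j=1}^k a^{i_j} where (i_1,…,i_k) ranges over multisets of size k of indices in Fin n. If a point z ∈ [0,1]² is δ-Pareto efficient with respect to k-UN(A) (i.e., there is no b ∈ k-UN(A) with b_1 > z_1 + δ and b_2 > z_2 + δ), then z is (δ + 1/k)-close to the Pareto frontier of A: there is no y in the convex hull of {a^k : k ∈ Fin n} with y_1 > z_1 + δ + 1/k and y_2 > z_2 + δ + 1/k. -/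
open Finset

/-- The set `k-UN(A)` of averages of the collection `a` over multisets of
indices of size `k`. -/
def kUN {n : ℕ} (a : Fin n → ℝ × ℝ) (k : ℕ) : Set (ℝ × ℝ) :=
  {b : ℝ × ℝ | ∃ m : Multiset (Fin n),
    Multiset.card m = k ∧ b = (k : ℝ)⁻¹ • (m.map a).sum}

/-- Any convex combination of points in the plane is dominated (coordinatewise)
by a convex combination of just two of the points. -/
lemma two_point_dom {ι : Type*} (z : ι → ℝ × ℝ) :
    ∀ (N : ℕ) (t : Finset ι) (w : ι → ℝ), t.card ≤ N →
    (∀ i ∈ t, 0 ≤ w i) → ∑ i ∈ t, w i = 1 →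
    ∃ p ∈ t, ∃ q ∈ t, ∃ μ : ℝ, 0 ≤ μ ∧ μ ≤ 1 ∧
      (∑ i ∈ t, w i • z i).1 ≤ μ * (z p).1 + (1 - μ) * (z q).1 ∧
      (∑ i ∈ t, w i • z i).2 ≤ μ * (z p).2 + (1 - μ) * (z q).2 := by
  classical
  intro N
  induction N with
  | zero =>
    intro t w hcard hw hsum
    have ht : t = ∅ := Finset.card_eq_zero.mp (Nat.le_zero.mp hcard)
    subst ht
    simp at hsum
  | succ N ih =>
    intro t w hcard hw hsum
    by_cases h3 : 3 ≤ t.card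
    · -- inductive step: at least three points in the support
      -- pick three distinct elements
      have htne : t.Nonempty := Finset.card_pos.mp (by omega)
      obtain ⟨r1, hr1⟩ := htne
      have h2 : 1 < (t.erase r1).card := by
        rw [Finset.card_erase_of_mem hr1]; omega
      obtain ⟨r2, hr2e, r3, hr3e, h23⟩ := Finset.one_lt_card.mp h2
      have h12 : r1 ≠ r2 := fun h => (Finset.mem_erase.mp hr2e).1 h.symm
      have h13 : r1 ≠ r3 := fun h => (Finset.mem_erase.mp hr3e).1 h.symm
      have hr2 : r2 ∈ t := Finset.mem_of_mem_erase hr2e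
      have hr3 : r3 ∈ t := Finset.mem_of_mem_erase hr3e
      set A := z r1 with hA
      set B := z r2 with hB
      set C := z r3 with hC
      -- a nontrivial "balanced" direction that moves the mass up-right
      have key : ∃ e0 e1 e2 ν : ℝ, 0 ≤ ν ∧ e0 + e1 + e2 = 0 ∧
          ¬(e0 = 0 ∧ e1 = 0 ∧ e2 = 0) ∧
          e0 * A.1 + e1 * B.1 + e2 * C.1 = ν ∧
          e0 * A.2 + e1 * B.2 + e2 * C.2 = ν := by
        obtain ⟨c0, c1, c2, hsum0, hx, hne⟩ :
            ∃ c0 c1 c2 : ℝ, c0 + c1 + c2 = 0 ∧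
              c0 * (A.1 - A.2) + c1 * (B.1 - B.2) + c2 * (C.1 - C.2) = 0 ∧
              ¬(c0 = 0 ∧ c1 = 0 ∧ c2 = 0) := by
          by_cases hx01 : A.1 - A.2 = B.1 - B.2
          · exact ⟨1, -1, 0, by ring, by rw [hx01]; ring, fun h => one_ne_zero h.1⟩
          · refine ⟨(B.1 - B.2) - (C.1 - C.2), (C.1 - C.2) - (A.1 - A.2),
              (A.1 - A.2) - (B.1 - B.2), by ring, by ring, fun h => hx01 ?_⟩
            have := h.2.2
            linarith
        set ν0 := c0 * A.1 + c1 * B.1 + c2 * C.1 with hν0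
        have h2nd : c0 * A.2 + c1 * B.2 + c2 * C.2 = ν0 := by
          rw [hν0]; linarith
        rcases le_or_gt 0 ν0 with h | h
        · exact ⟨c0, c1, c2, ν0, h, hsum0, hne, rfl, h2nd⟩
        · refine ⟨-c0, -c1, -c2, -ν0, by linarith, by linarith, ?_, by linarith, by linarith⟩
          intro h'
          exact hne ⟨neg_eq_zero.mp h'.1, neg_eq_zero.mp h'.2.1, neg_eq_zero.mp h'.2.2⟩
      obtain ⟨e0, e1, e2, ν, hν, hesum, hene, he1, he2⟩ := key
      -- the direction as a function on indices
      set d : ι → ℝ := fun i => if i = r1 then e0 else if i = r2 then e1 else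
        if i = r3 then e2 else 0 with hd
      have hd1 : d r1 = e0 := by simp [hd]
      have hd2 : d r2 = e1 := by simp [hd, h12.symm]
      have hd3 : d r3 = e2 := by simp [hd, h13.symm, h23.symm]
      have hdz : ∀ i, i ≠ r1 → i ≠ r2 → i ≠ r3 → d i = 0 := by
        intro i hi1 hi2 hi3; simp [hd, hi1, hi2, hi3]
      have hsub : ({r1, r2, r3} : Finset ι) ⊆ t := by
        intro x hx
        simp only [Finset.mem_insert, Finset.mem_singleton] at hx
        rcases hx with rfl | rfl | rfl <;> assumption
      have hmem1 : r1 ∉ ({r2, r3} : Finset ι) := by simp [h12, h13]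
      have hmem2 : r2 ∉ ({r3} : Finset ι) := by simp [h23]
      -- sum of d over t is 0
      have hdsum : ∑ i ∈ t, d i = 0 := by
        rw [← Finset.sum_subset hsub (fun x _ hx => by
          simp only [Finset.mem_insert, Finset.mem_singleton, not_or] at hx
          exact hdz x hx.1 hx.2.1 hx.2.2)]
        rw [Finset.sum_insert hmem1, Finset.sum_insert hmem2, Finset.sum_singleton,
          hd1, hd2, hd3]
        linarith
      -- weighted sum of d • z over t is (ν, ν)
      have hdvec : ∑ i ∈ t, d i • z i = ((ν, ν) : ℝ × ℝ) := by
        rw [← Finset.sum_subset hsub (fun x _ hx => by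
          simp only [Finset.mem_insert, Finset.mem_singleton, not_or] at hx
          rw [hdz x hx.1 hx.2.1 hx.2.2, zero_smul])]
        rw [Finset.sum_insert hmem1, Finset.sum_insert hmem2, Finset.sum_singleton,
          hd1, hd2, hd3]
        apply Prod.ext
        · simp only [Prod.fst_add, Prod.smul_fst, smul_eq_mul]
          linarith
        · simp only [Prod.snd_add, Prod.smul_snd, smul_eq_mul]
          linarith
      -- some component of d is negative on t
      have hneg : ∃ j ∈ t, d j < 0 := by
        by_cases he0 : e0 < 0
        · exact ⟨r1, hr1, by rwa [hd1]⟩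
        by_cases he1' : e1 < 0
        · exact ⟨r2, hr2, by rwa [hd2]⟩
        by_cases he2' : e2 < 0
        · exact ⟨r3, hr3, by rwa [hd3]⟩
        exfalso
        push_neg at he0 he1' he2'
        exact hene ⟨by linarith, by linarith, by linarith⟩
      obtain ⟨j, hjt, hjd⟩ := hneg
      set F : Finset ι := t.filter (fun i => d i < 0) with hF
      have hFne : F.Nonempty := ⟨j, Finset.mem_filter.mpr ⟨hjt, hjd⟩⟩
      set τ := F.inf' hFne (fun i => w i / (-d i)) with hτdef
      obtain ⟨i0, hi0F, hi0τ⟩ := F.exists_mem_eq_inf' hFne (fun i => w i / (-d i))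
      have hi0t : i0 ∈ t := (Finset.mem_filter.mp hi0F).1
      have hi0d : d i0 < 0 := (Finset.mem_filter.mp hi0F).2
      have hτ0 : 0 ≤ τ := by
        apply Finset.le_inf' hFne
        intro i hiF
        have := (Finset.mem_filter.mp hiF).2
        exact div_nonneg (hw i (Finset.mem_filter.mp hiF).1) (by linarith)
      set w' : ι → ℝ := fun i => w i + τ * d i with hw'
      have hw'0 : ∀ i ∈ t, 0 ≤ w' i := by
        intro i hit
        by_cases hdi : d i < 0
        · have hiF : i ∈ F := Finset.mem_filter.mpr ⟨hit, hdi⟩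
          have hle : τ ≤ w i / (-d i) := Finset.inf'_le _ hiF
          have hpos : 0 < -d i := by linarith
          have : τ * (-d i) ≤ w i := by
            rw [← le_div_iff₀ hpos] at *
            exact hle
          simp only [hw']
          nlinarith
        · push_neg at hdi
          have := hw i hit
          have : 0 ≤ τ * d i := mul_nonneg hτ0 hdi
          simp only [hw']
          linarith [hw i hit]
      have hw'sum : ∑ i ∈ t, w' i = 1 := by
        simp only [hw', Finset.sum_add_distrib, ← Finset.mul_sum, hdsum, hsum, mul_zero, add_zero]
      have hw'i0 : w' i0 = 0 := by
        have hdne : d i0 ≠ 0 := ne_of_lt hi0d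
        have hτeq : τ = w i0 / (-d i0) := hi0τ
        show w i0 + τ * d i0 = 0
        rw [hτeq]
        have hdne' : (-d i0) ≠ 0 := neg_ne_zero.mpr hdne
        have hh : w i0 / -d i0 * d i0 = -w i0 := by
          calc w i0 / -d i0 * d i0 = -(w i0 / -d i0 * -d i0) := by ring
            _ = -w i0 := by rw [div_mul_cancel₀ _ hdne']
        rw [hh]; ring
      -- the new center of mass
      have hcenter : ∑ i ∈ t, w' i • z i = (∑ i ∈ t, w i • z i) + τ • ((ν, ν) : ℝ × ℝ) := by
        rw [← hdvec, Finset.smul_sum]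
        rw [← Finset.sum_add_distrib]
        apply Finset.sum_congr rfl
        intro i _
        simp only [hw']
        rw [smul_smul, ← add_smul]
      have hcard' : (t.erase i0).card ≤ N := by
        rw [Finset.card_erase_of_mem hi0t]; omega
      have hsum' : ∑ i ∈ t.erase i0, w' i = 1 := by
        rw [Finset.sum_erase_eq_sub hi0t, hw'i0, hw'sum, sub_zero]
      obtain ⟨p, hp, q, hq, μ, hμ0, hμ1, hc1, hc2⟩ :=
        ih (t.erase i0) w' hcard' (fun i hi => hw'0 i (Finset.mem_of_mem_erase hi)) hsum'
      have hvec' : ∑ i ∈ t.erase i0, w' i • z i = ∑ i ∈ t, w' i • z i := by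
        rw [Finset.sum_erase_eq_sub hi0t, hw'i0, zero_smul, sub_zero]
      rw [hvec', hcenter] at hc1 hc2
      refine ⟨p, Finset.mem_of_mem_erase hp, q, Finset.mem_of_mem_erase hq, μ, hμ0, hμ1, ?_, ?_⟩
      · have hτν : 0 ≤ τ * ν := mul_nonneg hτ0 hν
        simp only [Prod.fst_add, Prod.smul_fst, smul_eq_mul] at hc1
        linarith
      · have hτν : 0 ≤ τ * ν := mul_nonneg hτ0 hν
        simp only [Prod.snd_add, Prod.smul_snd, smul_eq_mul] at hc2
        linarith
    · -- base case: at most two points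
      push_neg at h3
      have hne : t.Nonempty := by
        rcases Finset.eq_empty_or_nonempty t with h | h
        · exfalso; rw [h] at hsum; simp at hsum
        · exact h
      have hc : t.card = 1 ∨ t.card = 2 := by
        have := Finset.card_pos.mpr hne
        omega
      rcases hc with h1 | h2
      · obtain ⟨p, rfl⟩ := Finset.card_eq_one.mp h1
        have hwp : w p = 1 := by simpa using hsum
        refine ⟨p, by simp, p, by simp, 1, zero_le_one, le_refl 1, ?_, ?_⟩ <;>
          simp [hwp]
      · obtain ⟨p, q, hpq, ht⟩ := Finset.card_eq_two.mp h2
        subst ht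
        have hsum' : w p + w q = 1 := by
          rwa [Finset.sum_pair hpq] at hsum
        have hwp : 0 ≤ w p := hw p (by simp)
        have hwq : 0 ≤ w q := hw q (by simp)
        refine ⟨p, by simp, q, by simp, w p, hwp, by linarith, ?_, ?_⟩
        · rw [Finset.sum_pair hpq]
          apply le_of_eq
          simp only [Prod.fst_add, Prod.smul_fst, smul_eq_mul]
          linear_combination (z q).1 * hsum'
        · rw [Finset.sum_pair hpq]
          apply le_of_eq
          simp only [Prod.snd_add, Prod.smul_snd, smul_eq_mul]
          linear_combination (z q).2 * hsum'

/-- If a point is `δ`-Pareto efficient with respect to `k-UN(A)`, then it is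
`(δ + 1/k)`-close to the Pareto frontier of `A`. -/
theorem kUN_pareto_implies_close_to_frontier
    (n : ℕ) (a : Fin n → ℝ × ℝ)
    (ha : ∀ j, (a j).1 ∈ Set.Icc (0:ℝ) 1 ∧ (a j).2 ∈ Set.Icc (0:ℝ) 1)
    (k : ℕ) (hk : 1 ≤ k) (δ : ℝ)
    (z : ℝ × ℝ) (hz : z.1 ∈ Set.Icc (0:ℝ) 1 ∧ z.2 ∈ Set.Icc (0:ℝ) 1)
    (hPE : ¬ ∃ b ∈ kUN a k, b.1 > z.1 + δ ∧ b.2 > z.2 + δ) :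
    ¬ ∃ y ∈ convexHull ℝ (Set.range a),
      y.1 > z.1 + δ + 1 / k ∧ y.2 > z.2 + δ + 1 / k := by
  rintro ⟨y, hy, hy1, hy2⟩
  apply hPE
  rw [_root_.convexHull_eq] at hy
  obtain ⟨ι, t, w, zf, hw0, hw1, hzs, hcm⟩ := hy
  rw [Finset.centerMass_eq_of_sum_1 _ _ hw1] at hcm
  obtain ⟨p, hp, q, hq, μ, hμ0, hμ1, hd1, hd2⟩ :=
    two_point_dom zf t.card t w le_rfl hw0 hw1
  rw [hcm] at hd1 hd2
  obtain ⟨jp, hjp⟩ := hzs p hp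
  obtain ⟨jq, hjq⟩ := hzs q hq
  rw [← hjp] at hd1 hd2
  rw [← hjq] at hd1 hd2
  -- round μ to a multiple of 1/k
  set m : ℕ := ⌊μ * k⌋₊ with hm
  have hk0 : (0:ℝ) < k := by exact_mod_cast hk
  have hμk0 : 0 ≤ μ * k := mul_nonneg hμ0 (le_of_lt hk0)
  have hm1 : (m:ℝ) ≤ μ * k := Nat.floor_le hμk0
  have hm2 : μ * k < m + 1 := Nat.lt_floor_add_one _
  have hmk : m ≤ k := by
    have : μ * k ≤ k := by nlinarith
    have := Nat.floor_le_floor (R := ℝ) this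
    simpa using this
  have hmkR : ((k - m : ℕ) : ℝ) = (k:ℝ) - m := by
    rw [Nat.cast_sub hmk]
  -- the candidate point in kUN
  refine ⟨(k:ℝ)⁻¹ • ((m • a jp) + ((k - m) • a jq)),
    ⟨Multiset.replicate m jp + Multiset.replicate (k - m) jq, ?_, ?_⟩, ?_, ?_⟩
  · simp [Nat.add_sub_cancel' hmk]
  · simp [Multiset.map_add, Multiset.sum_replicate]
  · -- first coordinate
    obtain ⟨⟨hP0, hP1⟩, _⟩ := ha jp
    obtain ⟨⟨hQ0, hQ1⟩, _⟩ := ha jq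
    simp only [Prod.smul_fst, Prod.fst_add, Prod.smul_fst, smul_eq_mul, ← Nat.cast_smul_eq_nsmul ℝ,
      Prod.smul_fst, smul_eq_mul]
    rw [gt_iff_lt, inv_mul_eq_div, lt_div_iff₀ hk0]
    rw [hmkR]
    have hyk : (z.1 + δ + 1/k) * k < y.1 * k := by
      apply mul_lt_mul_of_pos_right hy1 hk0
    have h1k : (1/(k:ℝ)) * k = 1 := by field_simp
    have hd1k : y.1 * k ≤ (μ * (a jp).1 + (1 - μ) * (a jq).1) * k :=
      mul_le_mul_of_nonneg_right hd1 (le_of_lt hk0)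
    -- need: (z.1 + δ) * k < m * P1 + (k - m) * Q1
    nlinarith [mul_nonneg (sub_nonneg.mpr hm1) (sub_nonneg.mpr hP1),
      mul_nonneg (sub_nonneg.mpr hm1) hQ0]
  · -- second coordinate
    obtain ⟨_, ⟨hP0, hP1⟩⟩ := ha jp
    obtain ⟨_, ⟨hQ0, hQ1⟩⟩ := ha jq
    simp only [Prod.smul_snd, Prod.snd_add, Prod.smul_snd, smul_eq_mul, ← Nat.cast_smul_eq_nsmul ℝ,
      Prod.smul_snd, smul_eq_mul]
    rw [gt_iff_lt, inv_mul_eq_div, lt_div_iff₀ hk0]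
    rw [hmkR]
    have hyk : (z.2 + δ + 1/k) * k < y.2 * k := by
      apply mul_lt_mul_of_pos_right hy2 hk0
    have h1k : (1/(k:ℝ)) * k = 1 := by field_simp
    have hd2k : y.2 * k ≤ (μ * (a jp).2 + (1 - μ) * (a jq).2) * k :=
      mul_le_mul_of_nonneg_right hd2 (le_of_lt hk0)
    nlinarith [mul_nonneg (sub_nonneg.mpr hm1) (sub_nonneg.mpr hP1),
      mul_nonneg (sub_nonneg.mpr hm1) hQ0]
end

section
/- There is no one-shot bargaining mechanism for two alternatives with finite signal sets satisfying both uniqueness and existence of an ε-Pareto efficient equilibrium for ε < 1/2. Formally: for every ε < 1/2, every pair of nonempty finite types Σ₁, Σ₂, and every map f : Σ₁ × Σ₂ → (probability distributions on Fin 2), it is not the case that for every collection a : Fin 2 → [0,1]² the induced game Γ_f(a) has at least one mixed Nash equilibrium whose outcome is ε-Pareto efficient and all mixed Nash equilibria of Γ_f(a) have the same outcome. -/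
open Finset

/-- `z` is a probability distribution on the finite type `α`. -/
def IsDist {α : Type*} [Fintype α] (z : α → ℝ) : Prop :=
  (∀ s, 0 ≤ z s) ∧ ∑ s, z s = 1

/-- The expected pair of payoffs when the mechanism is `f` (mapping signal pairs to
distributions over alternatives), the collection is `a`, and the players play the
mixed strategies `z₁`, `z₂`. -/
noncomputable def mixedOut {n : ℕ} {S₁ S₂ : Type*} [Fintype S₁] [Fintype S₂]
    (f : S₁ → S₂ → Fin n → ℝ) (a : Fin n → ℝ × ℝ)
    (z₁ : S₁ → ℝ) (z₂ : S₂ → ℝ) : ℝ × ℝ :=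
  ∑ σ : S₁, ∑ τ : S₂, (z₁ σ * z₂ τ) • ∑ k, f σ τ k • a k

/-- `(z₁, z₂)` is a mixed Nash equilibrium of the game induced by the mechanism `f`
on the collection `a`. -/
def IsMixedNE {n : ℕ} {S₁ S₂ : Type*} [Fintype S₁] [Fintype S₂]
    (f : S₁ → S₂ → Fin n → ℝ) (a : Fin n → ℝ × ℝ)
    (z₁ : S₁ → ℝ) (z₂ : S₂ → ℝ) : Prop :=
  IsDist z₁ ∧ IsDist z₂ ∧
  (∀ w₁ : S₁ → ℝ, IsDist w₁ → (mixedOut f a w₁ z₂).1 ≤ (mixedOut f a z₁ z₂).1) ∧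
  (∀ w₂ : S₂ → ℝ, IsDist w₂ → (mixedOut f a z₁ w₂).2 ≤ (mixedOut f a z₁ z₂).2)

section Aux

variable {S₁ S₂ : Type*} [Fintype S₁] [Fintype S₂]

/-- The probability that alternative `0` is chosen. -/
noncomputable def Pval (f : S₁ → S₂ → Fin 2 → ℝ) (z₁ : S₁ → ℝ) (z₂ : S₂ → ℝ) : ℝ :=
  ∑ σ, ∑ τ, z₁ σ * z₂ τ * f σ τ 0

lemma sum_sum_dist {z₁ : S₁ → ℝ} {z₂ : S₂ → ℝ} (h1 : IsDist z₁) (h2 : IsDist z₂) :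
    ∑ σ : S₁, ∑ τ : S₂, z₁ σ * z₂ τ = 1 := by
  rw [← Finset.sum_mul_sum, h1.2, h2.2, one_mul]

lemma mixedOut_fst (f : S₁ → S₂ → Fin 2 → ℝ)
    (hf : ∀ σ τ, (∀ k, 0 ≤ f σ τ k) ∧ ∑ k, f σ τ k = 1)
    (a : Fin 2 → ℝ × ℝ) {z₁ : S₁ → ℝ} {z₂ : S₂ → ℝ} (h1 : IsDist z₁) (h2 : IsDist z₂) :
    (mixedOut f a z₁ z₂).1 =
      Pval f z₁ z₂ * (a 0).1 + (1 - Pval f z₁ z₂) * (a 1).1 := by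
  have hsub : ∀ σ τ, f σ τ 1 = 1 - f σ τ 0 := by
    intro σ τ
    have h := (hf σ τ).2
    rw [Fin.sum_univ_two] at h
    linarith
  have key := sum_sum_dist h1 h2
  simp only [mixedOut, Prod.fst_sum, Prod.smul_fst, Prod.fst_add, Fin.sum_univ_two,
    smul_eq_mul]
  have expand : ∀ σ τ, z₁ σ * z₂ τ * (f σ τ 0 * (a 0).1 + f σ τ 1 * (a 1).1)
      = z₁ σ * z₂ τ * f σ τ 0 * ((a 0).1 - (a 1).1) + z₁ σ * z₂ τ * (a 1).1 := by
    intro σ τ; rw [hsub]; ring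
  simp_rw [expand, Finset.sum_add_distrib, ← Finset.sum_mul]
  rw [key]
  unfold Pval
  ring

lemma mixedOut_snd (f : S₁ → S₂ → Fin 2 → ℝ)
    (hf : ∀ σ τ, (∀ k, 0 ≤ f σ τ k) ∧ ∑ k, f σ τ k = 1)
    (a : Fin 2 → ℝ × ℝ) {z₁ : S₁ → ℝ} {z₂ : S₂ → ℝ} (h1 : IsDist z₁) (h2 : IsDist z₂) :
    (mixedOut f a z₁ z₂).2 =
      Pval f z₁ z₂ * (a 0).2 + (1 - Pval f z₁ z₂) * (a 1).2 := by
  have hsub : ∀ σ τ, f σ τ 1 = 1 - f σ τ 0 := by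
    intro σ τ
    have h := (hf σ τ).2
    rw [Fin.sum_univ_two] at h
    linarith
  have key := sum_sum_dist h1 h2
  simp only [mixedOut, Prod.snd_sum, Prod.smul_snd, Prod.snd_add, Fin.sum_univ_two,
    smul_eq_mul]
  have expand : ∀ σ τ, z₁ σ * z₂ τ * (f σ τ 0 * (a 0).2 + f σ τ 1 * (a 1).2)
      = z₁ σ * z₂ τ * f σ τ 0 * ((a 0).2 - (a 1).2) + z₁ σ * z₂ τ * (a 1).2 := by
    intro σ τ; rw [hsub]; ring
  simp_rw [expand, Finset.sum_add_distrib, ← Finset.sum_mul]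
  rw [key]
  unfold Pval
  ring

/-- The point mass at `s₀`. -/
def delta {α : Type*} [DecidableEq α] (s₀ : α) : α → ℝ := fun s => if s = s₀ then 1 else 0

lemma isDist_delta {α : Type*} [Fintype α] [DecidableEq α] (s₀ : α) : IsDist (delta s₀) := by
  constructor
  · intro s; unfold delta; split <;> norm_num
  · simp [delta]

lemma Pval_left (f : S₁ → S₂ → Fin 2 → ℝ) (z₁ : S₁ → ℝ) (z₂ : S₂ → ℝ) :
    Pval f z₁ z₂ = ∑ σ, z₁ σ * ∑ τ, z₂ τ * f σ τ 0 := by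
  unfold Pval
  refine Finset.sum_congr rfl fun σ _ => ?_
  rw [Finset.mul_sum]
  exact Finset.sum_congr rfl fun τ _ => by ring

lemma Pval_right (f : S₁ → S₂ → Fin 2 → ℝ) (z₁ : S₁ → ℝ) (z₂ : S₂ → ℝ) :
    Pval f z₁ z₂ = ∑ τ, z₂ τ * ∑ σ, z₁ σ * f σ τ 0 := by
  unfold Pval
  rw [Finset.sum_comm]
  refine Finset.sum_congr rfl fun τ _ => ?_
  rw [Finset.mul_sum]
  exact Finset.sum_congr rfl fun σ _ => by ring

lemma Pval_delta_left [DecidableEq S₁] (f : S₁ → S₂ → Fin 2 → ℝ) (σ₀ : S₁) (z₂ : S₂ → ℝ) :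
    Pval f (delta σ₀) z₂ = ∑ τ, z₂ τ * f σ₀ τ 0 := by
  rw [Pval_left]
  simp [delta, ite_mul, zero_mul, one_mul, Finset.sum_ite_eq']

lemma Pval_delta_right [DecidableEq S₂] (f : S₁ → S₂ → Fin 2 → ℝ) (z₁ : S₁ → ℝ) (τ₀ : S₂) :
    Pval f z₁ (delta τ₀) = ∑ σ, z₁ σ * f σ τ₀ 0 := by
  rw [Pval_right]
  simp [delta, ite_mul, zero_mul, one_mul, Finset.sum_ite_eq']

lemma Pval_delta_delta [DecidableEq S₁] [DecidableEq S₂] (f : S₁ → S₂ → Fin 2 → ℝ)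
    (σ₀ : S₁) (τ₀ : S₂) : Pval f (delta σ₀) (delta τ₀) = f σ₀ τ₀ 0 := by
  rw [Pval_delta_left]
  simp [delta, ite_mul, zero_mul, one_mul, Finset.sum_ite_eq']

lemma weighted_le {α : Type*} [Fintype α] {w c : α → ℝ} (hw : IsDist w) {B : ℝ}
    (hc : ∀ s, c s ≤ B) : ∑ s, w s * c s ≤ B := by
  calc ∑ s, w s * c s ≤ ∑ s, w s * B :=
        Finset.sum_le_sum fun s _ => mul_le_mul_of_nonneg_left (hc s) (hw.1 s)
    _ = B := by rw [← Finset.sum_mul, hw.2, one_mul]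

lemma le_weighted {α : Type*} [Fintype α] {w c : α → ℝ} (hw : IsDist w) {B : ℝ}
    (hc : ∀ s, B ≤ c s) : B ≤ ∑ s, w s * c s := by
  calc B = ∑ s, w s * B := by rw [← Finset.sum_mul, hw.2, one_mul]
    _ ≤ ∑ s, w s * c s :=
        Finset.sum_le_sum fun s _ => mul_le_mul_of_nonneg_left (hc s) (hw.1 s)

lemma Pval_le (f : S₁ → S₂ → Fin 2 → ℝ) {z₁ : S₁ → ℝ} {z₂ : S₂ → ℝ}
    (h1 : IsDist z₁) (h2 : IsDist z₂) {B : ℝ} (hB : ∀ σ τ, f σ τ 0 ≤ B) :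
    Pval f z₁ z₂ ≤ B := by
  rw [Pval_left]
  exact weighted_le h1 fun σ => weighted_le h2 fun τ => hB σ τ

lemma le_Pval (f : S₁ → S₂ → Fin 2 → ℝ) {z₁ : S₁ → ℝ} {z₂ : S₂ → ℝ}
    (h1 : IsDist z₁) (h2 : IsDist z₂) {B : ℝ} (hB : ∀ σ τ, B ≤ f σ τ 0) :
    B ≤ Pval f z₁ z₂ := by
  rw [Pval_left]
  exact le_weighted h1 fun σ => le_weighted h2 fun τ => hB σ τ

end Aux

/-- No one-shot bargaining mechanism for two alternatives satisfies both uniqueness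
of the equilibrium outcome and existence of an `ε`-Pareto efficient equilibrium,
for `ε < 1/2`. -/
theorem no_unique_and_efficient_mechanism
    (ε : ℝ) (hε : ε < 1/2)
    (S₁ S₂ : Type) [Fintype S₁] [Fintype S₂] [Nonempty S₁] [Nonempty S₂]
    (f : S₁ → S₂ → Fin 2 → ℝ)
    (hf : ∀ σ τ, (∀ k, 0 ≤ f σ τ k) ∧ ∑ k, f σ τ k = 1) :
    ¬ (∀ a : Fin 2 → ℝ × ℝ,
        (∀ k, (a k).1 ∈ Set.Icc (0:ℝ) 1 ∧ (a k).2 ∈ Set.Icc (0:ℝ) 1) →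
        (∃ z₁ z₂, IsMixedNE f a z₁ z₂ ∧
          ¬ ∃ k : Fin 2, (a k).1 > (mixedOut f a z₁ z₂).1 + ε ∧
            (a k).2 > (mixedOut f a z₁ z₂).2 + ε) ∧
        (∀ z₁ z₂ w₁ w₂, IsMixedNE f a z₁ z₂ → IsMixedNE f a w₁ w₂ →
          mixedOut f a z₁ z₂ = mixedOut f a w₁ w₂)) := by
  classical
  intro hyp
  -- the pure conflict game
  set aA : Fin 2 → ℝ × ℝ := ![(1,0),(0,1)] with haA
  have hmemA : ∀ k, (aA k).1 ∈ Set.Icc (0:ℝ) 1 ∧ (aA k).2 ∈ Set.Icc (0:ℝ) 1 := by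
    intro k; fin_cases k <;> simp [haA]
  obtain ⟨⟨z₁s, z₂s, ⟨hd1, hd2, hbr1, hbr2⟩, -⟩, -⟩ := hyp aA hmemA
  have hA0 : aA 0 = ((1:ℝ), (0:ℝ)) := rfl
  have hA1 : aA 1 = ((0:ℝ), (1:ℝ)) := rfl
  set v := Pval f z₁s z₂s with hv
  have H1 : ∀ w₁, IsDist w₁ → Pval f w₁ z₂s ≤ v := by
    intro w₁ hw
    have h := hbr1 w₁ hw
    rw [mixedOut_fst f hf aA hw hd2, mixedOut_fst f hf aA hd1 hd2, hA0, hA1] at h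
    simp only at h
    linarith
  have H2 : ∀ w₂, IsDist w₂ → v ≤ Pval f z₁s w₂ := by
    intro w₂ hw
    have h := hbr2 w₂ hw
    rw [mixedOut_snd f hf aA hd1 hw, mixedOut_snd f hf aA hd1 hd2, hA0, hA1] at h
    simp only at h
    linarith
  rcases le_total v (1/2) with hvle | hvge
  · -- case v ≤ 1/2 : show f _ _ 0 ≤ 1/2 everywhere using the game where player 2
    -- is indifferent, then contradict efficiency in the common-interest game.
    obtain ⟨⟨σm, τm⟩, -, hmax⟩ :=
      Finset.exists_max_image (Finset.univ : Finset (S₁ × S₂)) (fun q => f q.1 q.2 0)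
        Finset.univ_nonempty
    set aC : Fin 2 → ℝ × ℝ := ![(1,0),(0,0)] with haC
    have hC0 : aC 0 = ((1:ℝ), (0:ℝ)) := rfl
    have hC1 : aC 1 = ((0:ℝ), (0:ℝ)) := rfl
    have hmemC : ∀ k, (aC k).1 ∈ Set.Icc (0:ℝ) 1 ∧ (aC k).2 ∈ Set.Icc (0:ℝ) 1 := by
      intro k; fin_cases k <;> simp [haC]
    obtain ⟨-, huniq⟩ := hyp aC hmemC
    have e1 : IsMixedNE f aC (delta σm) (delta τm) := by
      refine ⟨isDist_delta _, isDist_delta _, ?_, ?_⟩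
      · intro w₁ hw
        rw [mixedOut_fst f hf aC hw (isDist_delta _),
          mixedOut_fst f hf aC (isDist_delta _) (isDist_delta _), hC0, hC1,
          Pval_delta_delta]
        have hle : Pval f w₁ (delta τm) ≤ f σm τm 0 := by
          rw [Pval_delta_right]
          exact weighted_le hw fun σ => hmax (σ, τm) (Finset.mem_univ _)
        simp only
        linarith
      · intro w₂ hw
        rw [mixedOut_snd f hf aC (isDist_delta _) hw,
          mixedOut_snd f hf aC (isDist_delta _) (isDist_delta _), hC0, hC1]
        simp only
        linarith
    obtain ⟨σs, -, hσs⟩ :=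
      Finset.exists_max_image (Finset.univ : Finset S₁)
        (fun σ => ∑ τ, z₂s τ * f σ τ 0) Finset.univ_nonempty
    have e2 : IsMixedNE f aC (delta σs) z₂s := by
      refine ⟨isDist_delta _, hd2, ?_, ?_⟩
      · intro w₁ hw
        rw [mixedOut_fst f hf aC hw hd2, mixedOut_fst f hf aC (isDist_delta _) hd2, hC0, hC1]
        have hle : Pval f w₁ z₂s ≤ Pval f (delta σs) z₂s := by
          rw [Pval_left, Pval_delta_left]
          exact weighted_le hw fun σ => hσs σ (Finset.mem_univ _)
        simp only
        linarith
      · intro w₂ hw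
        rw [mixedOut_snd f hf aC (isDist_delta _) hw,
          mixedOut_snd f hf aC (isDist_delta _) hd2, hC0, hC1]
        simp only
        linarith
    have hout := congrArg Prod.fst (huniq _ _ _ _ e1 e2)
    rw [mixedOut_fst f hf aC (isDist_delta _) (isDist_delta _),
      mixedOut_fst f hf aC (isDist_delta _) hd2, hC0, hC1, Pval_delta_delta] at hout
    simp only at hout
    have hMv : f σm τm 0 ≤ v := by
      have := H1 (delta σs) (isDist_delta _)
      linarith
    -- hence the probability of alternative 0 is at most 1/2 for every profile
    have hall : ∀ σ τ, f σ τ 0 ≤ 1/2 := by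
      intro σ τ
      have := hmax (σ, τ) (Finset.mem_univ _)
      simp only at this
      linarith
    -- common-interest game
    set aB : Fin 2 → ℝ × ℝ := ![(1,1),(0,0)] with haB
    have hB0 : aB 0 = ((1:ℝ), (1:ℝ)) := rfl
    have hmemB : ∀ k, (aB k).1 ∈ Set.Icc (0:ℝ) 1 ∧ (aB k).2 ∈ Set.Icc (0:ℝ) 1 := by
      intro k; fin_cases k <;> simp [haB]
    obtain ⟨⟨y₁, y₂, ⟨hy1, hy2, -, -⟩, heff⟩, -⟩ := hyp aB hmemB
    have hQ : Pval f y₁ y₂ ≤ 1/2 := Pval_le f hy1 hy2 hall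
    apply heff
    refine ⟨0, ?_, ?_⟩
    · rw [mixedOut_fst f hf aB hy1 hy2, hB0]
      have : aB 1 = ((0:ℝ), (0:ℝ)) := rfl
      rw [this]
      simp only
      linarith
    · rw [mixedOut_snd f hf aB hy1 hy2, hB0]
      have : aB 1 = ((0:ℝ), (0:ℝ)) := rfl
      rw [this]
      simp only
      linarith
  · -- case v ≥ 1/2 : symmetric argument on player 2's side
    obtain ⟨⟨σn, τn⟩, -, hmin⟩ :=
      Finset.exists_min_image (Finset.univ : Finset (S₁ × S₂)) (fun q => f q.1 q.2 0)
        Finset.univ_nonempty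
    set aD : Fin 2 → ℝ × ℝ := ![(0,0),(0,1)] with haD
    have hD0 : aD 0 = ((0:ℝ), (0:ℝ)) := rfl
    have hD1 : aD 1 = ((0:ℝ), (1:ℝ)) := rfl
    have hmemD : ∀ k, (aD k).1 ∈ Set.Icc (0:ℝ) 1 ∧ (aD k).2 ∈ Set.Icc (0:ℝ) 1 := by
      intro k; fin_cases k <;> simp [haD]
    obtain ⟨-, huniq⟩ := hyp aD hmemD
    have e1 : IsMixedNE f aD (delta σn) (delta τn) := by
      refine ⟨isDist_delta _, isDist_delta _, ?_, ?_⟩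
      · intro w₁ hw
        rw [mixedOut_fst f hf aD hw (isDist_delta _),
          mixedOut_fst f hf aD (isDist_delta _) (isDist_delta _), hD0, hD1]
        simp only
        linarith
      · intro w₂ hw
        rw [mixedOut_snd f hf aD (isDist_delta _) hw,
          mixedOut_snd f hf aD (isDist_delta _) (isDist_delta _), hD0, hD1,
          Pval_delta_delta]
        have hge : f σn τn 0 ≤ Pval f (delta σn) w₂ := by
          rw [Pval_delta_left]
          exact le_weighted hw fun τ => hmin (σn, τ) (Finset.mem_univ _)
        simp only
        linarith
    obtain ⟨τt, -, hτt⟩ :=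
      Finset.exists_min_image (Finset.univ : Finset S₂)
        (fun τ => ∑ σ, z₁s σ * f σ τ 0) Finset.univ_nonempty
    have e2 : IsMixedNE f aD z₁s (delta τt) := by
      refine ⟨hd1, isDist_delta _, ?_, ?_⟩
      · intro w₁ hw
        rw [mixedOut_fst f hf aD hw (isDist_delta _),
          mixedOut_fst f hf aD hd1 (isDist_delta _), hD0, hD1]
        simp only
        linarith
      · intro w₂ hw
        rw [mixedOut_snd f hf aD hd1 hw, mixedOut_snd f hf aD hd1 (isDist_delta _),
          hD0, hD1]
        have hge : Pval f z₁s (delta τt) ≤ Pval f z₁s w₂ := by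
          rw [Pval_delta_right, Pval_right]
          exact le_weighted hw fun τ => hτt τ (Finset.mem_univ _)
        simp only
        linarith
    have hout := congrArg Prod.snd (huniq _ _ _ _ e1 e2)
    rw [mixedOut_snd f hf aD (isDist_delta _) (isDist_delta _),
      mixedOut_snd f hf aD hd1 (isDist_delta _), hD0, hD1, Pval_delta_delta] at hout
    simp only at hout
    have hMv : v ≤ f σn τn 0 := by
      have := H2 (delta τt) (isDist_delta _)
      linarith
    have hall : ∀ σ τ, 1/2 ≤ f σ τ 0 := by
      intro σ τ
      have := hmin (σ, τ) (Finset.mem_univ _)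
      simp only at this
      linarith
    set aE : Fin 2 → ℝ × ℝ := ![(0,0),(1,1)] with haE
    have hE0 : aE 0 = ((0:ℝ), (0:ℝ)) := rfl
    have hE1 : aE 1 = ((1:ℝ), (1:ℝ)) := rfl
    have hmemE : ∀ k, (aE k).1 ∈ Set.Icc (0:ℝ) 1 ∧ (aE k).2 ∈ Set.Icc (0:ℝ) 1 := by
      intro k; fin_cases k <;> simp [haE]
    obtain ⟨⟨y₁, y₂, ⟨hy1, hy2, -, -⟩, heff⟩, -⟩ := hyp aE hmemE
    have hQ : 1/2 ≤ Pval f y₁ y₂ := le_Pval f hy1 hy2 hall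
    apply heff
    refine ⟨1, ?_, ?_⟩
    · rw [mixedOut_fst f hf aE hy1 hy2, hE0, hE1]
      simp only
      linarith
    · rw [mixedOut_snd f hf aE hy1 hy2, hE0, hE1]
      simp only
      linarith
end

section
/- There is no one-shot bargaining mechanism with finite signal sets satisfying symmetry, invariance with respect to repetition of alternatives, and ε-Pareto efficiency in all equilibria for ε < 1/2. Formally: for every ε < 1/2, there is no pair consisting of a mechanism M₂ for 2 alternatives and a mechanism M₃ for 3 alternatives (each with nonempty finite signal types and a map to probability distributions over indices) such that: (SYM) for every symmetric collection a of 2 or 3 alternatives in [0,1]², the set of mixed Nash equilibrium outcomes of the corresponding game is invariant under swapping the two coordinates; (IRA) for every collection a : Fin 2 → [0,1]² and every j ∈ Fin 2, the set of mixed Nash equilibrium outcomes of M₃ on the collection (a⁰, a¹, a^j) equals the set of mixed Nash equilibrium outcomes of M₂ on a; and (ε-PE) for every collection a : Fin 3 → [0,1]², every mixed Nash equilibrium outcome (x₁,x₂) of M₃ on a satisfies that there is no index k with a^k_1 > x₁ + ε and a^k_2 > x₂ + ε. -/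
open Finset

/-- The set of mixed Nash equilibrium outcomes of the game induced by the
mechanism `f` on the collection `a`. -/
def NEO {n : ℕ} {S₁ S₂ : Type*} [Fintype S₁] [Fintype S₂]
    (f : S₁ → S₂ → Fin n → ℝ) (a : Fin n → ℝ × ℝ) : Set (ℝ × ℝ) :=
  {o | ∃ z₁ z₂, IsMixedNE f a z₁ z₂ ∧ o = mixedOut f a z₁ z₂}

/-- A collection lies in the unit square. -/
def InBox {n : ℕ} (a : Fin n → ℝ × ℝ) : Prop :=
  ∀ k, (a k).1 ∈ Set.Icc (0:ℝ) 1 ∧ (a k).2 ∈ Set.Icc (0:ℝ) 1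

noncomputable def bval {S₁ S₂ : Type*} [Fintype S₁] [Fintype S₂]
    (M : S₁ → S₂ → ℝ) (z₁ : S₁ → ℝ) (z₂ : S₂ → ℝ) : ℝ :=
  ∑ σ, ∑ τ, z₁ σ * z₂ τ * M σ τ

lemma mixedOut_comp {n : ℕ} {S₁ S₂ : Type*} [Fintype S₁] [Fintype S₂]
    (f : S₁ → S₂ → Fin n → ℝ) (a : Fin n → ℝ × ℝ) (z₁ : S₁ → ℝ) (z₂ : S₂ → ℝ) :
    mixedOut f a z₁ z₂ =
      (bval (fun σ τ => ∑ k, f σ τ k * (a k).1) z₁ z₂,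
       bval (fun σ τ => ∑ k, f σ τ k * (a k).2) z₁ z₂) := by
  unfold mixedOut bval
  refine Prod.ext ?_ ?_ <;>
    simp [Prod.fst_sum, Prod.snd_sum, Prod.smul_fst, Prod.smul_snd, smul_eq_mul]

lemma bval_one_sub {S₁ S₂ : Type*} [Fintype S₁] [Fintype S₂] (M : S₁ → S₂ → ℝ)
    {z₁ : S₁ → ℝ} {z₂ : S₂ → ℝ} (h₁ : IsDist z₁) (h₂ : IsDist z₂) :
    bval (fun σ τ => 1 - M σ τ) z₁ z₂ = 1 - bval M z₁ z₂ := by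
  have h : ∑ σ : S₁, ∑ τ : S₂, z₁ σ * z₂ τ = 1 := by
    rw [← Finset.sum_mul_sum, h₁.2, h₂.2, one_mul]
  unfold bval
  simp only [mul_sub, mul_one, Finset.sum_sub_distrib]
  rw [h]

lemma bval_mono {S₁ S₂ : Type*} [Fintype S₁] [Fintype S₂] {M N : S₁ → S₂ → ℝ}
    {z₁ : S₁ → ℝ} {z₂ : S₂ → ℝ} (h₁ : ∀ σ, 0 ≤ z₁ σ) (h₂ : ∀ τ, 0 ≤ z₂ τ)
    (h : ∀ σ τ, M σ τ ≤ N σ τ) :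
    bval M z₁ z₂ ≤ bval N z₁ z₂ :=
  Finset.sum_le_sum fun σ _ => Finset.sum_le_sum fun τ _ =>
    mul_le_mul_of_nonneg_left (h σ τ) (mul_nonneg (h₁ σ) (h₂ τ))
theorem exists_saddle {S₁ S₂ : Type} [Fintype S₁] [Fintype S₂] [Nonempty S₁] [Nonempty S₂]
    (M : S₁ → S₂ → ℝ) :
    ∃ z₁ z₂ v, IsDist z₁ ∧ IsDist z₂ ∧ bval M z₁ z₂ = v ∧
      (∀ w₁, IsDist w₁ → bval M w₁ z₂ ≤ v) ∧
      (∀ w₂, IsDist w₂ → v ≤ bval M z₁ w₂) := by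
  classical
  have hdist_iff : ∀ (z : S₂ → ℝ), z ∈ stdSimplex ℝ S₂ ↔ IsDist z := fun z => Iff.rfl
  set A : (S₂ → ℝ) → S₁ → ℝ := fun y σ => ∑ τ, y τ * M σ τ with hA
  have hbvalA : ∀ (x : S₁ → ℝ) (y : S₂ → ℝ), bval M x y = ∑ σ, x σ * A y σ := by
    intro x y
    refine Finset.sum_congr rfl fun σ _ => ?_
    rw [Finset.mul_sum]
    exact Finset.sum_congr rfl fun τ _ => by ring
  obtain ⟨τ0⟩ := ‹Nonempty S₂›
  set m : ℝ := Finset.univ.inf' Finset.univ_nonempty (fun p : S₁ × S₂ => M p.1 p.2) with hm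
  set m' : ℝ := Finset.univ.sup' Finset.univ_nonempty (fun p : S₁ × S₂ => M p.1 p.2) with hm'
  have hMm : ∀ σ τ, m ≤ M σ τ := fun σ τ => by
    rw [hm]; exact Finset.inf'_le (fun p : S₁ × S₂ => M p.1 p.2) (Finset.mem_univ (σ, τ))
  have hMm' : ∀ σ τ, M σ τ ≤ m' := fun σ τ => by
    rw [hm']; exact Finset.le_sup' (fun p : S₁ × S₂ => M p.1 p.2) (Finset.mem_univ (σ, τ))
  have hAy_bounds : ∀ y ∈ stdSimplex ℝ S₂, ∀ σ, A y σ ∈ Set.Icc m m' := by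
    intro y hy σ
    constructor
    · calc m = ∑ τ, y τ * m := by rw [← Finset.sum_mul, hy.2, one_mul]
        _ ≤ ∑ τ, y τ * M σ τ :=
          Finset.sum_le_sum fun τ _ => mul_le_mul_of_nonneg_left (hMm σ τ) (hy.1 τ)
    · calc A y σ ≤ ∑ τ, y τ * m' :=
          Finset.sum_le_sum fun τ _ => mul_le_mul_of_nonneg_left (hMm' σ τ) (hy.1 τ)
        _ = m' := by rw [← Finset.sum_mul, hy.2, one_mul]
  set K : Set ((S₂ → ℝ) × ℝ) :=
    (stdSimplex ℝ S₂ ×ˢ Set.Icc m m') ∩ {p | ∀ σ, A p.1 σ ≤ p.2} with hK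
  have hcont : ∀ σ : S₁, Continuous fun p : (S₂ → ℝ) × ℝ => A p.1 σ := by
    intro σ
    exact continuous_finset_sum _ fun τ _ =>
      ((continuous_apply τ).comp continuous_fst).mul continuous_const
  have hKclosed : IsClosed {p : (S₂ → ℝ) × ℝ | ∀ σ, A p.1 σ ≤ p.2} := by
    have h : {p : (S₂ → ℝ) × ℝ | ∀ σ, A p.1 σ ≤ p.2} = ⋂ σ, {p | A p.1 σ ≤ p.2} := by
      ext p; simp
    rw [h]
    exact isClosed_iInter fun σ => isClosed_le (hcont σ) continuous_snd
  have hKcompact : IsCompact K :=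
    ((isCompact_stdSimplex (𝕜 := ℝ) (ι := S₂)).prod isCompact_Icc).inter_right hKclosed
  have hy0 : Pi.single τ0 (1:ℝ) ∈ stdSimplex ℝ S₂ := single_mem_stdSimplex ℝ τ0
  have hKne : K.Nonempty := by
    obtain ⟨σ₁, _, hσ₁⟩ := Finset.exists_mem_eq_sup' (Finset.univ_nonempty (α := S₁)) (A (Pi.single τ0 1))
    refine ⟨(Pi.single τ0 1, A (Pi.single τ0 1) σ₁), ⟨hy0, hAy_bounds _ hy0 σ₁⟩, fun σ => ?_⟩
    exact le_trans (Finset.le_sup' (A (Pi.single τ0 1)) (Finset.mem_univ σ)) (le_of_eq hσ₁)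
  obtain ⟨p, hpK, hpmin⟩ := hKcompact.exists_isMinOn hKne continuous_snd.continuousOn
  obtain ⟨⟨hyΔ, hvIcc⟩, hyv⟩ := hpK
  set ystar := p.1 with hystar
  set v := p.2 with hv
  have hkey : ∀ y ∈ stdSimplex ℝ S₂, ∃ σ, v ≤ A y σ := by
    intro y hy
    by_contra hcon
    push_neg at hcon
    obtain ⟨σ₁, _, hσ₁⟩ := Finset.exists_mem_eq_sup' (Finset.univ_nonempty (α := S₁)) (A y)
    have hc1K : (y, A y σ₁) ∈ K := by
      refine ⟨⟨hy, hAy_bounds _ hy σ₁⟩, fun σ => ?_⟩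
      exact le_trans (Finset.le_sup' (A y) (Finset.mem_univ σ)) (le_of_eq hσ₁)
    have h1 : v ≤ A y σ₁ := hpmin hc1K
    linarith [hcon σ₁]
  -- separation
  set s : Set (S₁ → ℝ) := Set.univ.pi fun _ : S₁ => Set.Iio v with hs_def
  have hs_open : IsOpen s := isOpen_set_pi Set.finite_univ fun _ _ => isOpen_Iio
  have hs_convex : Convex ℝ s := convex_pi fun _ _ => convex_Iio v
  set LA : (S₂ → ℝ) →ₗ[ℝ] (S₁ → ℝ) :=
    { toFun := A
      map_add' := by
        intro x y; funext σ; simp [A, add_mul, Finset.sum_add_distrib]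
      map_smul' := by
        intro c y; funext σ; simp [A, Finset.mul_sum, mul_assoc] } with hLA
  set t : Set (S₁ → ℝ) := LA '' stdSimplex ℝ S₂ with ht_def
  have ht_convex : Convex ℝ t := (convex_stdSimplex ℝ S₂).linear_image LA
  have hdisj : Disjoint s t := by
    rw [Set.disjoint_left]
    rintro u hu ⟨y, hy, rfl⟩
    obtain ⟨σ, hσ⟩ := hkey y hy
    exact absurd (hu σ (Set.mem_univ σ)) (not_lt.2 hσ)
  obtain ⟨g, u₀, hgs, hgt⟩ := geometric_hahn_banach_open hs_convex hs_open ht_convex hdisj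
  set φ : S₁ → ℝ := fun σ => g ((Pi.single σ 1 : S₁ → ℝ)) with hφ
  have hgrep : ∀ u : S₁ → ℝ, g u = ∑ σ, u σ * φ σ := by
    intro u
    have h1 : ∑ σ, u σ • (Pi.single σ 1 : S₁ → ℝ) = u := by
      have h2 : ∀ σ : S₁, u σ • (Pi.single σ 1 : S₁ → ℝ) = Pi.single σ (u σ) := by
        intro σ; rw [← Pi.single_smul, smul_eq_mul, mul_one]
      simp_rw [h2]
      exact Finset.univ_sum_single u
    calc g u = g (∑ σ, u σ • (Pi.single σ 1 : S₁ → ℝ)) := by rw [h1]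
      _ = ∑ σ, u σ * φ σ := by
          rw [map_sum]
          exact Finset.sum_congr rfl fun σ _ => by rw [map_smul, smul_eq_mul]
  have hcstmem : ∀ δ : ℝ, 0 < δ → (fun _ : S₁ => v - δ) ∈ s := by
    intro δ hδ σ _
    simp only [Set.mem_Iio]; linarith
  have hφ0 : ∀ σ, 0 ≤ φ σ := by
    intro σ1
    by_contra hneg
    push_neg at hneg
    set cst : S₁ → ℝ := fun _ => v - 1 with hcst_def
    have hcst_mem : cst ∈ s := hcstmem 1 one_pos
    have hcstr : ∀ r : ℝ, 0 ≤ r → (cst - r • (Pi.single σ1 1 : S₁ → ℝ)) ∈ s := by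
      intro r hr σ _
      simp only [Set.mem_Iio, Pi.sub_apply, Pi.smul_apply, smul_eq_mul]
      by_cases h : σ = σ1
      · subst h; rw [Pi.single_eq_same]; show v - 1 - r * 1 < v; nlinarith
      · rw [Pi.single_eq_of_ne h]; show v - 1 - r * 0 < v; linarith
    have hφne : φ σ1 ≠ 0 := ne_of_lt hneg
    set r := (u₀ - g cst + 1) / (-φ σ1) with hr_def
    have hgcst : g cst < u₀ := hgs cst hcst_mem
    have hrpos : 0 ≤ r := div_nonneg (by linarith) (by linarith)
    have h1 : g (cst - r • (Pi.single σ1 1 : S₁ → ℝ)) < u₀ := hgs _ (hcstr r hrpos)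
    rw [map_sub, map_smul, smul_eq_mul] at h1
    have h2 : r * φ σ1 = -(u₀ - g cst + 1) := by
      rw [hr_def]; field_simp [hφne]
    rw [show g ((Pi.single σ1 1 : S₁ → ℝ)) = φ σ1 from rfl] at h1
    linarith
  set Ssum := ∑ σ, φ σ with hSsum
  have hS0 : 0 ≤ Ssum := Finset.sum_nonneg fun σ _ => hφ0 σ
  have hSpos : 0 < Ssum := by
    rcases eq_or_lt_of_le hS0 with h | h
    · exfalso
      have hall : ∀ σ, φ σ = 0 := by
        intro σ
        exact (Finset.sum_eq_zero_iff_of_nonneg (fun σ _ => hφ0 σ)).1 h.symm σ (Finset.mem_univ σ)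
      have h1 : g (fun _ => v - 1) < u₀ := hgs _ (hcstmem 1 one_pos)
      rw [hgrep] at h1
      simp only [hall, mul_zero, Finset.sum_const_zero] at h1
      have h2 : u₀ ≤ g (LA (Pi.single τ0 1)) := hgt _ ⟨_, hy0, rfl⟩
      rw [hgrep] at h2
      simp only [hall, mul_zero, Finset.sum_const_zero] at h2
      linarith
    · exact h
  have hvS : v * Ssum ≤ u₀ := by
    by_contra hcon
    push_neg at hcon
    set δ := (v * Ssum - u₀) / Ssum with hδ_def
    have hδpos : 0 < δ := div_pos (by linarith) hSpos
    have h1 : g (fun _ : S₁ => v - δ) < u₀ := hgs _ (hcstmem δ hδpos)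
    rw [hgrep] at h1
    rw [show ∑ σ, (v - δ) * φ σ = (v - δ) * Ssum from (Finset.mul_sum _ _ _).symm] at h1
    have h2 : δ * Ssum = v * Ssum - u₀ := by
      rw [hδ_def]; field_simp
    nlinarith
  set xstar : S₁ → ℝ := fun σ => φ σ / Ssum with hxstar
  have hxdist : IsDist xstar :=
    ⟨fun σ => div_nonneg (hφ0 σ) hS0, by
      rw [show ∑ σ, xstar σ = (∑ σ, φ σ) / Ssum from (Finset.sum_div _ _ _).symm]
      exact div_self (ne_of_gt hSpos)⟩
  have hxguar : ∀ y ∈ stdSimplex ℝ S₂, v ≤ ∑ σ, xstar σ * A y σ := by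
    intro y hy
    have h1 : u₀ ≤ g (LA y) := hgt _ ⟨y, hy, rfl⟩
    rw [hgrep] at h1
    have h2 : ∑ σ, (LA y) σ * φ σ = (∑ σ, xstar σ * A y σ) * Ssum := by
      rw [Finset.sum_mul]
      refine Finset.sum_congr rfl fun σ _ => ?_
      have : (LA y) σ = A y σ := rfl
      rw [this, hxstar]
      field_simp
    rw [h2] at h1
    have h3 : v * Ssum ≤ (∑ σ, xstar σ * A y σ) * Ssum := le_trans hvS h1
    exact le_of_mul_le_mul_right h3 hSpos
  have hmax : ∀ w₁, IsDist w₁ → bval M w₁ ystar ≤ v := by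
    intro w₁ hw
    rw [hbvalA]
    calc ∑ σ, w₁ σ * A ystar σ ≤ ∑ σ, w₁ σ * v :=
          Finset.sum_le_sum fun σ _ => mul_le_mul_of_nonneg_left (hyv σ) (hw.1 σ)
      _ = v := by rw [← Finset.sum_mul, hw.2, one_mul]
  have hmin : ∀ w₂, IsDist w₂ → v ≤ bval M xstar w₂ := by
    intro w₂ hw
    rw [hbvalA]
    exact hxguar w₂ ((hdist_iff w₂).2 hw)
  have hydist : IsDist ystar := (hdist_iff ystar).1 hyΔ
  refine ⟨xstar, ystar, v, hxdist, hydist, ?_, hmax, hmin⟩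
  exact le_antisymm (hmax xstar hxdist) (hmin ystar hydist)

/-- There is no pair of mechanisms (for 2 and 3 alternatives) satisfying symmetry,
invariance with respect to repetition of alternatives, and `ε`-Pareto efficiency in
all equilibria, for `ε < 1/2`. -/
theorem no_symmetric_IRA_efficient_mechanism
    (ε : ℝ) (hε : ε < 1/2)
    (S₁ S₂ T₁ T₂ : Type) [Fintype S₁] [Fintype S₂] [Fintype T₁] [Fintype T₂]
    [Nonempty S₁] [Nonempty S₂] [Nonempty T₁] [Nonempty T₂]
    (f₂ : S₁ → S₂ → Fin 2 → ℝ) (f₃ : T₁ → T₂ → Fin 3 → ℝ)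
    (hf₂ : ∀ σ τ, (∀ k, 0 ≤ f₂ σ τ k) ∧ ∑ k, f₂ σ τ k = 1)
    (hf₃ : ∀ σ τ, (∀ k, 0 ≤ f₃ σ τ k) ∧ ∑ k, f₃ σ τ k = 1)
    (hSYM2 : ∀ a : Fin 2 → ℝ × ℝ, InBox a → IsSymmColl a →
      ∀ o ∈ NEO f₂ a, Prod.swap o ∈ NEO f₂ a)
    (hSYM3 : ∀ a : Fin 3 → ℝ × ℝ, InBox a → IsSymmColl a →
      ∀ o ∈ NEO f₃ a, Prod.swap o ∈ NEO f₃ a)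
    (hIRA : ∀ a : Fin 2 → ℝ × ℝ, InBox a → ∀ j : Fin 2,
      NEO f₃ (Fin.snoc a (a j)) = NEO f₂ a)
    (hPE : ∀ a : Fin 3 → ℝ × ℝ, InBox a → ∀ o ∈ NEO f₃ a,
      ¬ ∃ k : Fin 3, (a k).1 > o.1 + ε ∧ (a k).2 > o.2 + ε) :
    False := by
  classical
  -- payoff matrices
  set A : S₁ → S₂ → ℝ := fun σ τ => f₂ σ τ 0 with hAd
  set G0 : T₁ → T₂ → ℝ := fun σ τ => f₃ σ τ 0 with hG0d
  set B : T₁ → T₂ → ℝ := fun σ τ => f₃ σ τ 0 + f₃ σ τ 2 with hBd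
  -- collections
  set a2 : Fin 2 → ℝ × ℝ := ![(1,0),(0,1)] with ha2d
  have ha20 : a2 0 = ((1:ℝ),(0:ℝ)) := rfl
  have ha21 : a2 1 = ((0:ℝ),(1:ℝ)) := rfl
  have box2 : InBox a2 := by
    intro k
    fin_cases k <;> constructor <;> constructor <;> norm_num [ha2d]
  -- outcome formula for the 2-alternative conflict game
  have out2 : ∀ z₁ z₂, IsDist z₁ → IsDist z₂ → mixedOut f₂ a2 z₁ z₂ =
      (bval A z₁ z₂, 1 - bval A z₁ z₂) := by
    intro z₁ z₂ h₁ h₂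
    rw [mixedOut_comp]
    have hM : (fun σ τ => ∑ k, f₂ σ τ k * (a2 k).1) = A := by
      funext σ τ
      rw [Fin.sum_univ_two, ha20, ha21, hAd]
      norm_num
    have hN : (fun σ τ => ∑ k, f₂ σ τ k * (a2 k).2) = fun σ τ => 1 - A σ τ := by
      funext σ τ
      rw [Fin.sum_univ_two, ha20, ha21, hAd]
      have hsum := (hf₂ σ τ).2
      rw [Fin.sum_univ_two] at hsum
      simp only
      linarith [hsum]
    rw [hM, hN, bval_one_sub A h₁ h₂]
  -- symmetry of the conflict collection
  have symm2 : IsSymmColl a2 := by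
    intro p
    have e0 : (a2 0 = p) ↔ (a2 1 = Prod.swap p) := by
      rw [ha20, ha21]
      constructor
      · intro h; subst h; rfl
      · intro h
        have h2 : p = Prod.swap ((0:ℝ),(1:ℝ)) := by rw [h, Prod.swap_swap]
        rw [h2]; rfl
    have e1 : (a2 1 = p) ↔ (a2 0 = Prod.swap p) := by
      rw [ha20, ha21]
      constructor
      · intro h; subst h; rfl
      · intro h
        have h2 : p = Prod.swap ((1:ℝ),(0:ℝ)) := by rw [h, Prod.swap_swap]
        rw [h2]; rfl
    by_cases h0 : a2 0 = p <;> by_cases h1 : a2 1 = p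
    · exfalso
      rw [ha20] at h0
      rw [ha21] at h1
      rw [← h0] at h1
      have := congrArg Prod.fst h1
      norm_num at this
    · have hs1 : a2 1 = Prod.swap p := e0.mp h0
      have hs0 : ¬ a2 0 = Prod.swap p := fun h => h1 (e1.mpr h)
      have F1 : Finset.univ.filter (fun k : Fin 2 => a2 k = p) = {0} := by
        rw [Finset.ext_iff, Fin.forall_fin_two]; simp [h0, h1]
      have F2 : Finset.univ.filter (fun k : Fin 2 => a2 k = Prod.swap p) = {1} := by
        rw [Finset.ext_iff, Fin.forall_fin_two]; simp [hs0, hs1]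
      rw [F1, F2]; rfl
    · have hs0 : a2 0 = Prod.swap p := e1.mp h1
      have hs1 : ¬ a2 1 = Prod.swap p := fun h => h0 (e0.mpr h)
      have F1 : Finset.univ.filter (fun k : Fin 2 => a2 k = p) = {1} := by
        rw [Finset.ext_iff, Fin.forall_fin_two]; simp [h0, h1]
      have F2 : Finset.univ.filter (fun k : Fin 2 => a2 k = Prod.swap p) = {0} := by
        rw [Finset.ext_iff, Fin.forall_fin_two]; simp [hs0, hs1]
      rw [F1, F2]; rfl
    · have hs0 : ¬ a2 0 = Prod.swap p := fun h => h1 (e1.mpr h)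
      have hs1 : ¬ a2 1 = Prod.swap p := fun h => h0 (e0.mpr h)
      have F1 : Finset.univ.filter (fun k : Fin 2 => a2 k = p) = ∅ := by
        rw [Finset.ext_iff, Fin.forall_fin_two]; simp [h0, h1]
      have F2 : Finset.univ.filter (fun k : Fin 2 => a2 k = Prod.swap p) = ∅ := by
        rw [Finset.ext_iff, Fin.forall_fin_two]; simp [hs0, hs1]
      rw [F1, F2]
  -- minimax equilibrium of the conflict game
  obtain ⟨z₁, z₂, v, hz₁, hz₂, hval, hmax, hmin⟩ := exists_saddle A
  have NE1 : IsMixedNE f₂ a2 z₁ z₂ := by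
    refine ⟨hz₁, hz₂, fun w₁ hw₁ => ?_, fun w₂ hw₂ => ?_⟩
    · rw [out2 w₁ z₂ hw₁ hz₂, out2 z₁ z₂ hz₁ hz₂]
      show bval A w₁ z₂ ≤ bval A z₁ z₂
      rw [hval]; exact hmax w₁ hw₁
    · rw [out2 z₁ w₂ hz₁ hw₂, out2 z₁ z₂ hz₁ hz₂]
      show 1 - bval A z₁ w₂ ≤ 1 - bval A z₁ z₂
      rw [hval]; linarith [hmin w₂ hw₂]
  have mem1 : ((v : ℝ), 1 - v) ∈ NEO f₂ a2 :=
    ⟨z₁, z₂, NE1, by rw [out2 z₁ z₂ hz₁ hz₂, hval]⟩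
  -- symmetry forces the value to be 1/2
  obtain ⟨z₁', z₂', NE', hout'⟩ := hSYM2 a2 box2 symm2 _ mem1
  rw [out2 z₁' z₂' NE'.1 NE'.2.1] at hout'
  have hv' : bval A z₁' z₂' = 1 - v := by
    have := congrArg Prod.fst hout'
    simpa using this.symm
  have h_a : bval A z₁ z₂' ≤ 1 - v := by
    have h := NE'.2.2.1 z₁ hz₁
    rw [out2 z₁ z₂' hz₁ NE'.2.1, out2 z₁' z₂' NE'.1 NE'.2.1] at h
    have h' : bval A z₁ z₂' ≤ bval A z₁' z₂' := h
    linarith [hv']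
  have h_b : v ≤ bval A z₁ z₂' := by
    have h := NE1.2.2.2 z₂' NE'.2.1
    rw [out2 z₁ z₂' hz₁ NE'.2.1, out2 z₁ z₂ hz₁ hz₂] at h
    have h' : 1 - bval A z₁ z₂' ≤ 1 - bval A z₁ z₂ := h
    rw [hval] at h'
    linarith
  have h_c : bval A z₁' z₂ ≤ v := by
    have h := NE1.2.2.1 z₁' NE'.1
    rw [out2 z₁' z₂ NE'.1 hz₂, out2 z₁ z₂ hz₁ hz₂] at h
    have h' : bval A z₁' z₂ ≤ bval A z₁ z₂ := h
    rw [hval] at h'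
    exact h'
  have h_d : 1 - v ≤ bval A z₁' z₂ := by
    have h := NE'.2.2.2 z₂ hz₂
    rw [out2 z₁' z₂ NE'.1 hz₂, out2 z₁' z₂' NE'.1 NE'.2.1] at h
    have h' : 1 - bval A z₁' z₂ ≤ 1 - bval A z₁' z₂' := h
    rw [hv'] at h'
    linarith
  have hv2 : v = 1/2 := by linarith
  have memH : (((1:ℝ)/2, (1:ℝ)/2) : ℝ × ℝ) ∈ NEO f₂ a2 := by
    have h : ((v : ℝ), 1 - v) = (((1:ℝ)/2, (1:ℝ)/2) : ℝ × ℝ) := by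
      rw [hv2]; norm_num
    rw [← h]; exact mem1
  -- push through IRA, j = 1 : the game ((1,0),(0,1),(0,1)), zero-sum in G0
  set c1 : Fin 3 → ℝ × ℝ := ![(1,0),(0,1),(0,1)] with hc1d
  have hb1 : Fin.snoc a2 (a2 1) = c1 := by
    funext k; fin_cases k <;> rfl
  have hIRA1 := hIRA a2 box2 1
  rw [hb1] at hIRA1
  have out31 : ∀ z₁ z₂, IsDist z₁ → IsDist z₂ → mixedOut f₃ c1 z₁ z₂ =
      (bval G0 z₁ z₂, 1 - bval G0 z₁ z₂) := by
    intro y₁ y₂ h₁ h₂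
    rw [mixedOut_comp]
    have hM : (fun σ τ => ∑ k, f₃ σ τ k * (c1 k).1) = G0 := by
      funext σ τ
      rw [Fin.sum_univ_three, hG0d]
      show f₃ σ τ 0 * 1 + f₃ σ τ 1 * 0 + f₃ σ τ 2 * 0 = f₃ σ τ 0
      ring
    have hN : (fun σ τ => ∑ k, f₃ σ τ k * (c1 k).2) = fun σ τ => 1 - G0 σ τ := by
      funext σ τ
      rw [Fin.sum_univ_three, hG0d]
      have hsum := (hf₃ σ τ).2
      rw [Fin.sum_univ_three] at hsum
      show f₃ σ τ 0 * 0 + f₃ σ τ 1 * 1 + f₃ σ τ 2 * 1 = 1 - f₃ σ τ 0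
      linarith
    rw [hM, hN, bval_one_sub G0 h₁ h₂]
  have memb1 : (((1:ℝ)/2, (1:ℝ)/2) : ℝ × ℝ) ∈ NEO f₃ c1 := by
    rw [hIRA1]; exact memH
  obtain ⟨s₁, s₂, NEs, houts⟩ := memb1
  rw [out31 s₁ s₂ NEs.1 NEs.2.1] at houts
  have hG0val : bval G0 s₁ s₂ = 1/2 := by
    have := congrArg Prod.fst houts
    simpa using this.symm
  have star1 : ∀ w₂, IsDist w₂ → 1/2 ≤ bval G0 s₁ w₂ := by
    intro w₂ hw
    have h := NEs.2.2.2 w₂ hw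
    rw [out31 s₁ w₂ NEs.1 hw, out31 s₁ s₂ NEs.1 NEs.2.1] at h
    have h' : 1 - bval G0 s₁ w₂ ≤ 1 - bval G0 s₁ s₂ := h
    linarith [hG0val]
  -- push through IRA, j = 0 : the game ((1,0),(0,1),(1,0)), zero-sum in B
  set c0 : Fin 3 → ℝ × ℝ := ![(1,0),(0,1),(1,0)] with hc0d
  have hb0 : Fin.snoc a2 (a2 0) = c0 := by
    funext k; fin_cases k <;> rfl
  have hIRA0 := hIRA a2 box2 0
  rw [hb0] at hIRA0
  have out30 : ∀ z₁ z₂, IsDist z₁ → IsDist z₂ → mixedOut f₃ c0 z₁ z₂ =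
      (bval B z₁ z₂, 1 - bval B z₁ z₂) := by
    intro y₁ y₂ h₁ h₂
    rw [mixedOut_comp]
    have hM : (fun σ τ => ∑ k, f₃ σ τ k * (c0 k).1) = B := by
      funext σ τ
      rw [Fin.sum_univ_three, hBd]
      show f₃ σ τ 0 * 1 + f₃ σ τ 1 * 0 + f₃ σ τ 2 * 1 = f₃ σ τ 0 + f₃ σ τ 2
      ring
    have hN : (fun σ τ => ∑ k, f₃ σ τ k * (c0 k).2) = fun σ τ => 1 - B σ τ := by
      funext σ τ
      rw [Fin.sum_univ_three, hBd]
      have hsum := (hf₃ σ τ).2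
      rw [Fin.sum_univ_three] at hsum
      show f₃ σ τ 0 * 0 + f₃ σ τ 1 * 1 + f₃ σ τ 2 * 0 = 1 - (f₃ σ τ 0 + f₃ σ τ 2)
      linarith
    rw [hM, hN, bval_one_sub B h₁ h₂]
  have memb0 : (((1:ℝ)/2, (1:ℝ)/2) : ℝ × ℝ) ∈ NEO f₃ c0 := by
    rw [hIRA0]; exact memH
  obtain ⟨t₁, t₂, NEt, houtt⟩ := memb0
  rw [out30 t₁ t₂ NEt.1 NEt.2.1] at houtt
  have hBval : bval B t₁ t₂ = 1/2 := by
    have := congrArg Prod.fst houtt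
    simpa using this.symm
  have star2 : ∀ w₁, IsDist w₁ → bval B w₁ t₂ ≤ 1/2 := by
    intro w₁ hw
    have h := NEt.2.2.1 w₁ hw
    rw [out30 w₁ t₂ hw NEt.2.1, out30 t₁ t₂ NEt.1 NEt.2.1] at h
    have h' : bval B w₁ t₂ ≤ bval B t₁ t₂ := h
    linarith [hBval]
  -- the crucial collection ((1,0),(0,1),(1,1))
  set cs : Fin 3 → ℝ × ℝ := ![(1,0),(0,1),(1,1)] with hcsd
  have boxc : InBox cs := by
    intro k
    fin_cases k <;> constructor <;> constructor <;> norm_num [hcsd]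
  have out3s : ∀ z₁ z₂, IsDist z₁ → IsDist z₂ → mixedOut f₃ cs z₁ z₂ =
      (bval B z₁ z₂, 1 - bval G0 z₁ z₂) := by
    intro y₁ y₂ h₁ h₂
    rw [mixedOut_comp]
    have hM : (fun σ τ => ∑ k, f₃ σ τ k * (cs k).1) = B := by
      funext σ τ
      rw [Fin.sum_univ_three, hBd]
      show f₃ σ τ 0 * 1 + f₃ σ τ 1 * 0 + f₃ σ τ 2 * 1 = f₃ σ τ 0 + f₃ σ τ 2
      ring
    have hN : (fun σ τ => ∑ k, f₃ σ τ k * (cs k).2) = fun σ τ => 1 - G0 σ τ := by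
      funext σ τ
      rw [Fin.sum_univ_three, hG0d]
      have hsum := (hf₃ σ τ).2
      rw [Fin.sum_univ_three] at hsum
      show f₃ σ τ 0 * 0 + f₃ σ τ 1 * 1 + f₃ σ τ 2 * 1 = 1 - f₃ σ τ 0
      linarith
    rw [hM, hN, bval_one_sub G0 h₁ h₂]
  -- the pair (s₁, t₂) is an equilibrium of the game on cs with outcome (1/2, 1/2)
  have k1 : 1/2 ≤ bval G0 s₁ t₂ := star1 t₂ NEt.2.1
  have k2 : bval B s₁ t₂ ≤ 1/2 := star2 s₁ NEs.1
  have k3 : bval G0 s₁ t₂ ≤ bval B s₁ t₂ := by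
    refine bval_mono NEs.1.1 NEt.2.1.1 fun σ τ => ?_
    rw [hG0d, hBd]
    have := (hf₃ σ τ).1 2
    show f₃ σ τ 0 ≤ f₃ σ τ 0 + f₃ σ τ 2
    linarith
  have kG : bval G0 s₁ t₂ = 1/2 := by linarith
  have kB : bval B s₁ t₂ = 1/2 := by linarith
  have NEc : IsMixedNE f₃ cs s₁ t₂ := by
    refine ⟨NEs.1, NEt.2.1, fun w₁ hw₁ => ?_, fun w₂ hw₂ => ?_⟩
    · rw [out3s w₁ t₂ hw₁ NEt.2.1, out3s s₁ t₂ NEs.1 NEt.2.1]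
      show bval B w₁ t₂ ≤ bval B s₁ t₂
      rw [kB]; exact star2 w₁ hw₁
    · rw [out3s s₁ w₂ NEs.1 hw₂, out3s s₁ t₂ NEs.1 NEt.2.1]
      show 1 - bval G0 s₁ w₂ ≤ 1 - bval G0 s₁ t₂
      rw [kG]; linarith [star1 w₂ hw₂]
  have memc : (((1:ℝ)/2, (1:ℝ)/2) : ℝ × ℝ) ∈ NEO f₃ cs :=
    ⟨s₁, t₂, NEc, by rw [out3s s₁ t₂ NEs.1 NEt.2.1, kG, kB]; norm_num⟩
  -- Pareto efficiency is violated by the third alternative (1,1)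
  refine hPE cs boxc _ memc ⟨2, ?_, ?_⟩
  · show (1:ℝ) > (1:ℝ)/2 + ε
    linarith
  · show (1:ℝ) > (1:ℝ)/2 + ε
    linarith
end

section
/- For every collection a : Fin n → [0,1]² (n ≥ 1), the set of pure Nash equilibrium outcomes of the game Γ_{CUDD}(A) is exactly AG(A) ∪ DIS(A), where, writing m̄_i = max_k a^k_i and m̲_i = min_k a^k_i, AG(A) = {a^k : a^k_1 ≥ (m̄_1 + m̲_1)/2 and a^k_2 ≥ (m̄_2 + m̲_2)/2} and DIS(A) = {(a^j + a^k)/2 : a^j_1 = m̄_1 and a^k_2 = m̄_2}. -/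
open Finset

/-- The outcome of the coordination-with-uniform-dictatorial-disagreement mechanism
when the players submit the (agreement, disagreement) index pairs `s₁`, `s₂`. -/
noncomputable def CUDDout {n : ℕ} (a : Fin n → ℝ × ℝ) (s₁ s₂ : Fin n × Fin n) : ℝ × ℝ :=
  if s₁.1 = s₂.1 then a s₁.1 else (1/2 : ℝ) • (a s₁.2 + a s₂.2)

/-- `(s₁, s₂)` is a pure Nash equilibrium of the game `Γ_{CUDD}(A)`. -/
def CUDDIsPureNE {n : ℕ} (a : Fin n → ℝ × ℝ) (s₁ s₂ : Fin n × Fin n) : Prop :=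
  (∀ t₁ : Fin n × Fin n, (CUDDout a t₁ s₂).1 ≤ (CUDDout a s₁ s₂).1) ∧
  (∀ t₂ : Fin n × Fin n, (CUDDout a s₁ t₂).2 ≤ (CUDDout a s₁ s₂).2)

lemma CUDDout_agree {n : ℕ} (a : Fin n → ℝ × ℝ) (s₁ s₂ : Fin n × Fin n)
    (h : s₁.1 = s₂.1) : CUDDout a s₁ s₂ = a s₁.1 := if_pos h

lemma CUDDout_dis {n : ℕ} (a : Fin n → ℝ × ℝ) (s₁ s₂ : Fin n × Fin n)
    (h : s₁.1 ≠ s₂.1) : CUDDout a s₁ s₂ = (1/2 : ℝ) • (a s₁.2 + a s₂.2) := if_neg h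

lemma half_smul_fst (x y : ℝ × ℝ) : ((1/2 : ℝ) • (x + y)).1 = 1/2 * (x.1 + y.1) := by
  simp [Prod.smul_fst]; ring

lemma half_smul_snd (x y : ℝ × ℝ) : ((1/2 : ℝ) • (x + y)).2 = 1/2 * (x.2 + y.2) := by
  simp [Prod.smul_snd]; ring

/-- Characterization of the pure Nash equilibrium outcomes of `Γ_{CUDD}(A)`:
the agreement outcomes `AG(A)` together with the disagreement outcomes `DIS(A)`. -/
theorem CUDD_pure_NE_outcomes_characterization
    (n : ℕ) (hn : 1 ≤ n) (a : Fin n → ℝ × ℝ)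
    (ha : ∀ k, (a k).1 ∈ Set.Icc (0:ℝ) 1 ∧ (a k).2 ∈ Set.Icc (0:ℝ) 1) :
    {o : ℝ × ℝ | ∃ s₁ s₂ : Fin n × Fin n, CUDDIsPureNE a s₁ s₂ ∧ o = CUDDout a s₁ s₂} =
      {o : ℝ × ℝ | ∃ k : Fin n, a k = o ∧
        ((Finset.univ.sup' (Finset.univ_nonempty_iff.mpr (Fin.pos_iff_nonempty.mp hn))
            (fun j => (a j).1)) +
         (Finset.univ.inf' (Finset.univ_nonempty_iff.mpr (Fin.pos_iff_nonempty.mp hn))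
            (fun j => (a j).1))) / 2 ≤ o.1 ∧
        ((Finset.univ.sup' (Finset.univ_nonempty_iff.mpr (Fin.pos_iff_nonempty.mp hn))
            (fun j => (a j).2)) +
         (Finset.univ.inf' (Finset.univ_nonempty_iff.mpr (Fin.pos_iff_nonempty.mp hn))
            (fun j => (a j).2))) / 2 ≤ o.2} ∪
      {o : ℝ × ℝ | ∃ j k : Fin n,
        (a j).1 = Finset.univ.sup' (Finset.univ_nonempty_iff.mpr (Fin.pos_iff_nonempty.mp hn))
          (fun i => (a i).1) ∧
        (a k).2 = Finset.univ.sup' (Finset.univ_nonempty_iff.mpr (Fin.pos_iff_nonempty.mp hn))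
          (fun i => (a i).2) ∧
        o = (1/2 : ℝ) • (a j + a k)} := by
  set hne : (Finset.univ : Finset (Fin n)).Nonempty :=
    Finset.univ_nonempty_iff.mpr (Fin.pos_iff_nonempty.mp hn) with hnedef
  set M1 := Finset.univ.sup' hne (fun j => (a j).1) with hM1def
  set m1 := Finset.univ.inf' hne (fun j => (a j).1) with hm1def
  set M2 := Finset.univ.sup' hne (fun j => (a j).2) with hM2def
  set m2 := Finset.univ.inf' hne (fun j => (a j).2) with hm2def
  have hleM1 : ∀ i, (a i).1 ≤ M1 := fun i =>
    Finset.le_sup' (fun j => (a j).1) (Finset.mem_univ i)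
  have hlem1 : ∀ i, m1 ≤ (a i).1 := fun i =>
    Finset.inf'_le (fun j => (a j).1) (Finset.mem_univ i)
  have hleM2 : ∀ i, (a i).2 ≤ M2 := fun i =>
    Finset.le_sup' (fun j => (a j).2) (Finset.mem_univ i)
  have hlem2 : ∀ i, m2 ≤ (a i).2 := fun i =>
    Finset.inf'_le (fun j => (a j).2) (Finset.mem_univ i)
  ext o
  simp only [Set.mem_union, Set.mem_setOf_eq]
  constructor
  · rintro ⟨s₁, s₂, ⟨hN1, hN2⟩, rfl⟩
    by_cases hg : s₁.1 = s₂.1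
    · -- agreement equilibrium: outcome lies in AG(A)
      left
      have hout : CUDDout a s₁ s₂ = a s₁.1 := CUDDout_agree a s₁ s₂ hg
      rw [hout]
      refine ⟨s₁.1, rfl, ?_, ?_⟩
      · by_cases hq : ∃ q : Fin n, q ≠ s₂.1
        · obtain ⟨q, hqne⟩ := hq
          obtain ⟨jm, -, hjm⟩ := Finset.exists_mem_eq_sup' hne (fun j => (a j).1)
          rw [← hM1def] at hjm
          have hdev := hN1 (q, jm)
          rw [hout, CUDDout_dis a (q, jm) s₂ hqne, half_smul_fst] at hdev
          have h1 : m1 ≤ (a s₂.2).1 := hlem1 _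
          linarith
        · push_neg at hq
          have hMeq : M1 ≤ (a s₂.1).1 := Finset.sup'_le _ _ fun i _ => by rw [hq i]
          have hmeq : (a s₂.1).1 ≤ m1 := Finset.le_inf' _ _ fun i _ => by rw [hq i]
          have := hlem1 s₂.1
          rw [hg]
          linarith
      · by_cases hq : ∃ q : Fin n, s₁.1 ≠ q
        · obtain ⟨q, hqne⟩ := hq
          obtain ⟨jm, -, hjm⟩ := Finset.exists_mem_eq_sup' hne (fun j => (a j).2)
          rw [← hM2def] at hjm
          have hdev := hN2 (q, jm)
          rw [hout, CUDDout_dis a s₁ (q, jm) hqne, half_smul_snd] at hdev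
          have h1 : m2 ≤ (a s₁.2).2 := hlem2 _
          linarith
        · push_neg at hq
          have hMeq : M2 ≤ (a s₁.1).2 := Finset.sup'_le _ _ fun i _ => by rw [← hq i]
          have hmeq : (a s₁.1).2 ≤ m2 := Finset.le_inf' _ _ fun i _ => by rw [← hq i]
          have := hlem2 s₁.1
          linarith
    · -- disagreement equilibrium: outcome lies in DIS(A)
      right
      have hout : CUDDout a s₁ s₂ = (1/2 : ℝ) • (a s₁.2 + a s₂.2) :=
        CUDDout_dis a s₁ s₂ hg
      refine ⟨s₁.2, s₂.2, ?_, ?_, by rw [hout]⟩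
      · refine le_antisymm (hleM1 _) (Finset.sup'_le _ _ fun i _ => ?_)
        have hdev := hN1 (s₁.1, i)
        rw [hout, CUDDout_dis a (s₁.1, i) s₂ hg, half_smul_fst, half_smul_fst] at hdev
        linarith
      · refine le_antisymm (hleM2 _) (Finset.sup'_le _ _ fun i _ => ?_)
        have hdev := hN2 (s₂.1, i)
        have hg' : s₁.1 ≠ (s₂.1, i).1 := hg
        rw [hout, CUDDout_dis a s₁ (s₂.1, i) hg', half_smul_snd, half_smul_snd] at hdev
        linarith
  · rintro (⟨k, hk, h1, h2⟩ | ⟨j, k, hj, hk, rfl⟩)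
    · -- AG(A) outcomes are equilibrium outcomes
      obtain ⟨p1, -, hp1⟩ := Finset.exists_mem_eq_inf' hne (fun i => (a i).1)
      obtain ⟨p2, -, hp2⟩ := Finset.exists_mem_eq_inf' hne (fun i => (a i).2)
      rw [← hm1def] at hp1
      rw [← hm2def] at hp2
      have hok1 : (a k).1 = o.1 := by rw [hk]
      have hok2 : (a k).2 = o.2 := by rw [hk]
      have hout : CUDDout a (k, p2) (k, p1) = a k := CUDDout_agree a _ _ rfl
      refine ⟨(k, p2), (k, p1), ⟨?_, ?_⟩, by rw [hout, hk]⟩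
      · intro t₁
        rw [hout]
        by_cases ht : t₁.1 = (k, p1).1
        · rw [CUDDout_agree a _ _ ht]
          rw [show t₁.1 = k from ht]
        · rw [CUDDout_dis a _ _ ht, half_smul_fst]
          have := hleM1 t₁.2
          linarith
      · intro t₂
        rw [hout]
        by_cases ht : (k, p2).1 = t₂.1
        · rw [CUDDout_agree a _ _ ht]
        · rw [CUDDout_dis a _ _ ht, half_smul_snd]
          have := hleM2 t₂.2
          linarith
    · -- DIS(A) outcomes are equilibrium outcomes
      by_cases hall : ∀ i : Fin n, i = j
      · have hkj : k = j := hall k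
        have hout : CUDDout a (j, j) (j, j) = a j := CUDDout_agree a _ _ rfl
        refine ⟨(j, j), (j, j), ⟨?_, ?_⟩, ?_⟩
        · intro t₁
          have h : t₁.1 = ((j, j) : Fin n × Fin n).1 := hall t₁.1
          rw [hout, CUDDout_agree a _ _ h, show t₁.1 = j from h]
        · intro t₂
          have h : ((j, j) : Fin n × Fin n).1 = t₂.1 := (hall t₂.1).symm
          rw [hout, CUDDout_agree a _ _ h]
        · rw [hout, hkj, ← two_smul ℝ (a j), smul_smul]
          norm_num
      · push_neg at hall
        obtain ⟨q, hqj⟩ := hall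
        obtain ⟨p1, -, hp1⟩ := Finset.exists_mem_eq_inf' hne (fun i => (a i).1)
        rw [← hm1def] at hp1
        have hex : ∃ g : Fin n, g ≠ j ∧ (a g).1 ≤ (M1 + (a k).1) / 2 := by
          by_cases hpj : p1 = j
          · have hM1m1 : m1 = M1 := by rw [hp1, hpj, hj]
            have hq1 : (a q).1 ≤ M1 := hleM1 q
            have hq2 : m1 ≤ (a k).1 := hlem1 k
            exact ⟨q, hqj, by linarith⟩
          · have hle : m1 ≤ M1 := by have := hleM1 j; have := hlem1 j; linarith
            have h2 : m1 ≤ (a k).1 := hlem1 k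
            exact ⟨p1, hpj, by rw [← hp1]; linarith⟩
        obtain ⟨g₂, hg₂j, hg₂le⟩ := hex
        have hjg₂ : ((j, j) : Fin n × Fin n).1 ≠ ((g₂, k) : Fin n × Fin n).1 :=
          Ne.symm hg₂j
        have hout : CUDDout a (j, j) (g₂, k) = (1/2 : ℝ) • (a j + a k) :=
          CUDDout_dis a _ _ hjg₂
        refine ⟨(j, j), (g₂, k), ⟨?_, ?_⟩, by rw [hout]⟩
        · intro t₁
          rw [hout, half_smul_fst]
          by_cases ht : t₁.1 = ((g₂, k) : Fin n × Fin n).1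
          · rw [CUDDout_agree a _ _ ht, show t₁.1 = g₂ from ht]
            rw [← hj] at hg₂le
            linarith
          · rw [CUDDout_dis a _ _ ht, half_smul_fst]
            have h := hleM1 t₁.2
            rw [← hj] at h
            linarith
        · intro t₂
          rw [hout, half_smul_snd]
          by_cases ht : ((j, j) : Fin n × Fin n).1 = t₂.1
          · rw [CUDDout_agree a _ _ ht]
            have hh : (a j).2 ≤ M2 := hleM2 j
            rw [← hk] at hh
            exact by linarith
          · rw [CUDDout_dis a _ _ ht, half_smul_snd]
            have h := hleM2 t₂.2
            rw [← hk] at h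
            linarith
end
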